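/- arXiv:2409.14136 — 4 statements merged into one kernel-verified Lean document; each statement's English description precedes it below -/
import Mathlib

section
/- Let G be a symmetric {0,1} adjacency matrix of an undirected simple graph on n nodes, and let i, j be distinct nodes such that the neighbors of j (excluding i) are strictly contained in neighbors of i (excluding j). Let L be a nonempty set of nodes disjoint from {i,j} and from the neighbors of i. Then for every integer k ≥ 2, the total number of walks of length k in the graph G + Σ_{l∈L} E_{il} is strictly greater than in the graph G + Σ_{l∈L} E_{jl}, i.e., 1'(G + Σ E_{il})^k 1 > 1'(G + Σ E_{jl})^k 1. -/
open Matrix BigOperators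

/-- The symmetric elementary matrix with 1 in entries (a,b) and (b,a), 0 elsewhere. -/
def E {n : ℕ} (a b : Fin n) : Matrix (Fin n) (Fin n) ℝ :=
  fun p q => if (p = a ∧ q = b) ∨ (p = b ∧ q = a) then 1 else 0

/-- The neighborhood of node `i` in the (0/1-valued) network `G`. -/
def Nbr {n : ℕ} (G : Matrix (Fin n) (Fin n) ℝ) (i : Fin n) : Set (Fin n) :=
  {l | G i l = 1}

open Finset

/-!
Write `A` and `B` for the graphs in which `L` is attached to `i`, resp. to `j`, and put
`u = e_i - e_j`, `f = 1_L`, `c = g_ij`. Then `A - B = u fᵀ + f uᵀ`, and the nesting of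
neighbourhoods gives `A u = s - c u + f` and `B u = s - c u - f` for a vector `s ≥ 0`, the
indicator of the neighbours of `i` other than `j` that are not neighbours of `j`; it is nonzero
because the nesting is strict.

Telescoping `A^(k+1) - B^(k+1)` writes the difference `D k` of the walk counts of length `k + 1`
as a convolution of the walk weights `u·Aᵖ1`, `f·Bᵠ1`, `f·Aᵖ1`, `u·Bᵠ1`, and the relations for
`A u` and `B u` turn it into the damped recurrence `D (k+1) = -c D k + Y k`. Here `Y k` is a
convolution of nonnegative walk counts which, since walk counts from non-isolated vertices grow
with the length, increases by at least `(s·1)(f·Bᵏ⁺¹1) > 0` at each step. As `0 ≤ c ≤ 1`, the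
damping never eats more than the previous value of `Y`, so `D (k+1) > 0`.
-/

theorem pow_succ_sub_pow_succ_eq_sum_antidiagonal {R : Type*} [Ring R] (a b : R) (k : ℕ) :
    a ^ (k + 1) - b ^ (k + 1) = ∑ x ∈ antidiagonal k, a ^ x.1 * (a - b) * b ^ x.2 := by
  induction k with
  | zero => simp
  | succ k ih =>
    have h : a ^ (k + 2) - b ^ (k + 2) =
        (a - b) * b ^ (k + 1) + a * (a ^ (k + 1) - b ^ (k + 1)) := by
      rw [pow_succ' a (k + 1), pow_succ' b (k + 1)]
      noncomm_ring
    rw [h, ih, Nat.sum_antidiagonal_succ, mul_sum, pow_zero, one_mul]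
    simp only [pow_succ', mul_assoc]

section Sequences

variable {c : ℝ} {U Ψ S T Γ Φ : ℕ → ℝ}

theorem sum_antidiagonal_succ_of_recurrence (hU0 : U 0 = 0) (hΨ0 : Ψ 0 = 0)
    (hU : ∀ p, U (p + 1) = S p - c * U p + Γ p) (hΨ : ∀ q, Ψ (q + 1) = T q - c * Ψ q - Φ q)
    (k : ℕ) :
    ∑ x ∈ antidiagonal (k + 1), (U x.1 * Φ x.2 + Γ x.1 * Ψ x.2) =
      -c * ∑ x ∈ antidiagonal k, (U x.1 * Φ x.2 + Γ x.1 * Ψ x.2) +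
        ∑ x ∈ antidiagonal k, (S x.1 * Φ x.2 + Γ x.1 * T x.2) := by
  rw [sum_add_distrib, Nat.sum_antidiagonal_succ, Nat.sum_antidiagonal_succ']
  simp only [hU0, hΨ0, hU, hΨ, zero_mul, mul_zero, zero_add, mul_sum, ← sum_add_distrib]
  exact sum_congr rfl fun x _ => by ring

theorem sum_antidiagonal_add_le_succ (hS : Monotone S) (hΓ : Monotone Γ) (hΓ0 : 0 ≤ Γ)
    (hΦ : 0 ≤ Φ) (hT : 0 ≤ T) (k : ℕ) :
    ∑ x ∈ antidiagonal k, (S x.1 * Φ x.2 + Γ x.1 * T x.2) + S 0 * Φ (k + 1) ≤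
      ∑ x ∈ antidiagonal (k + 1), (S x.1 * Φ x.2 + Γ x.1 * T x.2) := by
  have hshift : ∑ x ∈ antidiagonal k, (S x.1 * Φ x.2 + Γ x.1 * T x.2) ≤
      ∑ x ∈ antidiagonal k, (S (x.1 + 1) * Φ x.2 + Γ (x.1 + 1) * T x.2) :=
    sum_le_sum fun x _ => add_le_add (mul_le_mul_of_nonneg_right (hS x.1.le_succ) (hΦ _))
      (mul_le_mul_of_nonneg_right (hΓ x.1.le_succ) (hT _))
  rw [Nat.sum_antidiagonal_succ]
  linarith [mul_nonneg (hΓ0 0) (hT (k + 1))]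

theorem le_of_damped_recurrence {D Y g : ℕ → ℝ} (hc0 : 0 ≤ c) (hc1 : c ≤ 1) (hD0 : D 0 = 0)
    (hD : ∀ k, D (k + 1) = -c * D k + Y k) (hg : 0 ≤ g) (hY0 : g 0 ≤ Y 0)
    (hY : ∀ k, Y k + g (k + 1) ≤ Y (k + 1)) (k : ℕ) : g k ≤ D (k + 1) := by
  suffices ∀ k, g k ≤ D (k + 1) ∧ D (k + 1) ≤ Y k from (this k).1
  intro k
  induction k with
  | zero => simp [hD, hD0, hY0]
  | succ k ih =>
    have hDk : 0 ≤ D (k + 1) := (hg k).trans ih.1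
    have hcD : c * D (k + 1) ≤ D (k + 1) := mul_le_of_le_one_left hDk hc1
    rw [hD]
    constructor <;> linarith [hY k, mul_nonneg hc0 hDk]

end Sequences

section Walks

variable {ι : Type*} {M : Matrix ι ι ℝ}

theorem Matrix.IsAdjMatrix.nonneg (hM : M.IsAdjMatrix) (x y : ι) : 0 ≤ M x y := by
  rcases hM.zero_or_one x y with h | h <;> simp [h]

theorem Matrix.IsAdjMatrix.le_one (hM : M.IsAdjMatrix) (x y : ι) : M x y ≤ 1 := by
  rcases hM.zero_or_one x y with h | h <;> simp [h]

variable [Fintype ι] [DecidableEq ι]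

/-- For an adjacency matrix `M`, the number of walks of length `p`, each weighted by `w` at its
starting vertex. -/
def walkWeight (M : Matrix ι ι ℝ) (w : ι → ℝ) (p : ℕ) : ℝ := w ⬝ᵥ (M ^ p *ᵥ 1)

theorem walkWeight_zero (M : Matrix ι ι ℝ) (w : ι → ℝ) : walkWeight M w 0 = w ⬝ᵥ 1 := by
  simp [walkWeight]

theorem walkWeight_succ (hM : M.IsSymm) (w : ι → ℝ) (p : ℕ) :
    walkWeight M w (p + 1) = walkWeight M (M *ᵥ w) p := by
  rw [walkWeight, pow_succ', ← mulVec_mulVec, dotProduct_mulVec, ← mulVec_transpose, hM.eq,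
    walkWeight]

theorem pow_succ_mulVec_apply (v : ι → ℝ) (p : ℕ) (x : ι) :
    (M ^ (p + 1) *ᵥ v) x = ∑ y, M x y * (M ^ p *ᵥ v) y := by
  rw [pow_succ', ← mulVec_mulVec]; rfl

theorem Matrix.IsAdjMatrix.pow_mulVec_one_nonneg (hM : M.IsAdjMatrix) (p : ℕ) :
    0 ≤ M ^ p *ᵥ 1 := by
  induction p with
  | zero => simp [zero_le_one]
  | succ p ih =>
    intro x
    rw [pow_succ_mulVec_apply]
    exact sum_nonneg fun y _ => mul_nonneg (hM.nonneg x y) (ih y)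

theorem Matrix.IsAdjMatrix.pow_mulVec_one_le_succ (hM : M.IsAdjMatrix) (p : ℕ) {x : ι}
    (hx : ∃ y, M x y = 1) : (M ^ p *ᵥ 1) x ≤ (M ^ (p + 1) *ᵥ 1) x := by
  induction p generalizing x with
  | zero =>
    obtain ⟨y, hy⟩ := hx
    rw [pow_succ_mulVec_apply]
    calc (M ^ 0 *ᵥ 1) x = M x y * (M ^ 0 *ᵥ 1) y := by simp [hy]
      _ ≤ ∑ z, M x z * (M ^ 0 *ᵥ 1) z :=
        single_le_sum (f := fun z => M x z * (M ^ 0 *ᵥ 1) z)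
          (fun z _ => mul_nonneg (hM.nonneg x z) (by simp)) (mem_univ y)
  | succ p ih =>
    rw [pow_succ_mulVec_apply, pow_succ_mulVec_apply]
    refine sum_le_sum fun y _ => ?_
    rcases hM.zero_or_one x y with h | h
    · simp [h]
    · rw [h, one_mul, one_mul]
      exact ih ⟨x, (hM.symm.apply x y).trans h⟩

theorem walkWeight_one_eq_sum (M : Matrix ι ι ℝ) (p : ℕ) :
    walkWeight M 1 p = ∑ u, ∑ v, (M ^ p) u v := by
  simp [walkWeight, mulVec, dotProduct]

theorem Matrix.IsAdjMatrix.walkWeight_nonneg (hM : M.IsAdjMatrix) {w : ι → ℝ} (hw : 0 ≤ w)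
    (p : ℕ) : 0 ≤ walkWeight M w p :=
  dotProduct_nonneg_of_nonneg hw (hM.pow_mulVec_one_nonneg p)

theorem Matrix.IsAdjMatrix.walkWeight_mono (hM : M.IsAdjMatrix) {w : ι → ℝ} (hw : 0 ≤ w)
    (hw' : ∀ x, w x ≠ 0 → ∃ y, M x y = 1) : Monotone (walkWeight M w) := by
  refine monotone_nat_of_le_succ fun p => sum_le_sum fun x _ => ?_
  by_cases hx : w x = 0
  · simp [hx]
  · exact mul_le_mul_of_nonneg_left (hM.pow_mulVec_one_le_succ p (hw' x hx)) (hw x)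

theorem walkWeight_sub_walkWeight {A B : Matrix ι ι ℝ} {u f : ι → ℝ} (hA : A.IsSymm)
    (hAB : A - B = vecMulVec u f + vecMulVec f u) (k : ℕ) :
    walkWeight A 1 (k + 1) - walkWeight B 1 (k + 1) =
      ∑ x ∈ antidiagonal k,
        (walkWeight A u x.1 * walkWeight B f x.2 + walkWeight A f x.1 * walkWeight B u x.2) := by
  rw [walkWeight, walkWeight, ← dotProduct_sub, ← sub_mulVec,
    pow_succ_sub_pow_succ_eq_sum_antidiagonal, sum_mulVec, dotProduct_sum]
  refine sum_congr rfl fun x _ => ?_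
  rw [← mulVec_mulVec, ← mulVec_mulVec, dotProduct_mulVec, ← mulVec_transpose, (hA.pow x.1).eq,
    hAB, add_mulVec, vecMulVec_mulVec, vecMulVec_mulVec]
  simp only [walkWeight, op_smul_eq_smul, dotProduct_add, dotProduct_smul, smul_eq_mul]
  rw [dotProduct_comm _ u, dotProduct_comm _ f]
  ring

end Walks

section Comparison

variable {ι : Type*} [Fintype ι] [DecidableEq ι]

theorem walkWeight_lt_walkWeight {A B : Matrix ι ι ℝ} {u f s : ι → ℝ} {c : ℝ}
    (hA : A.IsAdjMatrix) (hB : B.IsAdjMatrix) (hAB : A - B = vecMulVec u f + vecMulVec f u)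
    (hAu : A *ᵥ u = s - c • u + f) (hBu : B *ᵥ u = s - c • u - f) (hu : u ⬝ᵥ 1 = 0)
    (hc0 : 0 ≤ c) (hc1 : c ≤ 1) (hs : 0 ≤ s) (hf : 0 ≤ f)
    (hsA : ∀ x, s x ≠ 0 → ∃ y, A x y = 1) (hfA : ∀ x, f x ≠ 0 → ∃ y, A x y = 1)
    (hfB : ∀ x, f x ≠ 0 → ∃ y, B x y = 1) (hs1 : 0 < s ⬝ᵥ 1) (hf1 : 0 < f ⬝ᵥ 1) (k : ℕ) :
    walkWeight B 1 (k + 2) < walkWeight A 1 (k + 2) := by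
  have hrec := sum_antidiagonal_succ_of_recurrence (c := c)
    (U := walkWeight A u) (Ψ := walkWeight B u) (S := walkWeight A s) (T := walkWeight B s)
    (Γ := walkWeight A f) (Φ := walkWeight B f)
    (by rw [walkWeight_zero, hu]) (by rw [walkWeight_zero, hu])
    (fun p => by
      rw [walkWeight_succ hA.symm, hAu]
      simp only [walkWeight, add_dotProduct, sub_dotProduct, smul_dotProduct, smul_eq_mul])
    (fun q => by
      rw [walkWeight_succ hB.symm, hBu]
      simp only [walkWeight, sub_dotProduct, smul_dotProduct, smul_eq_mul])
  have hΦ := hB.walkWeight_mono hf hfB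
  have hgain := sum_antidiagonal_add_le_succ (hA.walkWeight_mono hs hsA)
    (hA.walkWeight_mono hf hfA) (hA.walkWeight_nonneg hf) (hB.walkWeight_nonneg hf)
    (hB.walkWeight_nonneg hs)
  have hdamp := le_of_damped_recurrence (D := fun k => ∑ x ∈ antidiagonal k,
      (walkWeight A u x.1 * walkWeight B f x.2 + walkWeight A f x.1 * walkWeight B u x.2))
    (g := fun k => walkWeight A s 0 * walkWeight B f k) hc0 hc1 (by simp [walkWeight_zero, hu])
    hrec
    (fun k => mul_nonneg (hA.walkWeight_nonneg hs 0) (hB.walkWeight_nonneg hf k))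
    (by simpa using mul_nonneg (hA.walkWeight_nonneg hf 0) (hB.walkWeight_nonneg hs 0)) hgain k
  have hpos : 0 < walkWeight A s 0 * walkWeight B f k := by
    rw [walkWeight_zero]
    exact mul_pos hs1 (hf1.trans_le (by simpa [walkWeight_zero] using hΦ (Nat.zero_le k)))
  have hdiff := walkWeight_sub_walkWeight hA.symm hAB (k + 1)
  linarith

end Comparison

section Swap

variable {n : ℕ} {G : Matrix (Fin n) (Fin n) ℝ} {L : Finset (Fin n)} {a i j : Fin n}

theorem sum_E_eq_vecMulVec (ha : a ∉ L) :
    ∑ l ∈ L, E a l = vecMulVec (Pi.single a 1) (fun x => if x ∈ L then 1 else 0) +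
      vecMulVec (fun x => if x ∈ L then 1 else 0) (Pi.single a 1) := by
  ext x y
  have hterm : ∀ l ∈ L, E a l x y = (if x = a then 1 else 0) * (if y = l then 1 else 0) +
      (if x = l then 1 else 0) * (if y = a then 1 else 0) := by
    intro l hl
    have hal : a ≠ l := fun h => ha (h ▸ hl)
    simp only [E]
    split_ifs <;> simp_all
  rw [Matrix.sum_apply, sum_congr rfl hterm]
  simp [sum_add_distrib, sum_ite_eq, vecMulVec_apply, Pi.single_apply]

theorem add_sum_E_apply (ha : a ∉ L) (x y : Fin n) :
    (G + ∑ l ∈ L, E a l) x y =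
      G x y + (if x = a ∧ y ∈ L then 1 else 0) + if x ∈ L ∧ y = a then 1 else 0 := by
  rw [Matrix.add_apply, sum_E_eq_vecMulVec ha, Matrix.add_apply, add_assoc]
  simp only [vecMulVec_apply, Pi.single_apply]
  split_ifs <;> simp_all

theorem add_sum_E_apply_self_right (ha : a ∉ L) (x : Fin n) :
    (G + ∑ l ∈ L, E a l) x a = G x a + if x ∈ L then 1 else 0 := by
  simp [add_sum_E_apply ha, ha]

theorem isAdjMatrix_add_sum_E (hG : G.IsAdjMatrix) (ha : a ∉ L) (hL : ∀ l ∈ L, G a l = 0) :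
    (G + ∑ l ∈ L, E a l).IsAdjMatrix where
  zero_or_one x y := by
    rw [add_sum_E_apply ha]
    by_cases hx : x = a <;> by_cases hy : y = a
    · subst hx hy; simp [hG.apply_diag, ha]
    · subst hx
      by_cases hyL : y ∈ L <;> simp [hy, hyL, ha, hL, hG.zero_or_one]
    · subst hy
      by_cases hxL : x ∈ L <;> simp [hx, hxL, ha, ← hG.symm.apply x y, hL, hG.zero_or_one]
    · simp [hx, hy, hG.zero_or_one x y]
  symm := by
    ext x y
    rw [transpose_apply, add_sum_E_apply ha, add_sum_E_apply ha, hG.symm.apply]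
    by_cases hx : x = a <;> by_cases hy : y = a <;> simp [hx, hy]
  apply_diag x := by
    rw [add_sum_E_apply ha]
    by_cases hx : x = a <;> simp [hx, ha, hG.apply_diag]

theorem add_sum_E_sub_add_sum_E (hi : i ∉ L) (hj : j ∉ L) :
    (G + ∑ l ∈ L, E i l) - (G + ∑ l ∈ L, E j l) =
      vecMulVec (Pi.single i 1 - Pi.single j 1) (fun x => if x ∈ L then 1 else 0) +
        vecMulVec (fun x => if x ∈ L then 1 else 0) (Pi.single i 1 - Pi.single j 1) := by
  rw [add_sub_add_left_eq_sub, sum_E_eq_vecMulVec hi, sum_E_eq_vecMulVec hj, sub_vecMulVec,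
    vecMulVec_sub]
  abel

theorem add_sum_E_mulVec (ha : a ∉ L) (hi : i ∉ L) (hj : j ∉ L) :
    (G + ∑ l ∈ L, E a l) *ᵥ (Pi.single i 1 - Pi.single j 1) =
      G *ᵥ (Pi.single i 1 - Pi.single j 1) +
        (Pi.single i 1 - Pi.single j 1 : Fin n → ℝ) a • fun x => if x ∈ L then 1 else 0 := by
  rw [add_mulVec, sum_E_eq_vecMulVec ha, add_mulVec, vecMulVec_mulVec, vecMulVec_mulVec,
    op_smul_eq_smul, op_smul_eq_smul]
  simp [dotProduct_sub, hi, hj, Pi.single_apply, eq_comm]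

theorem mulVec_single_sub_single_add_smul_apply (hG : G.IsAdjMatrix) (hij : i ≠ j) (x : Fin n) :
    (G *ᵥ (Pi.single i 1 - Pi.single j 1) + G i j • (Pi.single i 1 - Pi.single j 1) :
      Fin n → ℝ) x =
      if x = i ∨ x = j then 0 else G x i - G x j := by
  by_cases hxi : x = i
  · subst hxi; simp [hij, hG.apply_diag, mulVec_sub]
  by_cases hxj : x = j
  · subst hxj; simp [hxi, hG.apply_diag, hG.symm.apply x i, mulVec_sub]
  simp [hxi, hxj, mulVec_sub]

theorem mulVec_single_sub_single_add_smul_apply_mem_Icc (hG : G.IsAdjMatrix) (hij : i ≠ j)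
    (hji : ∀ x, x ≠ i → G j x = 1 → G i x = 1) (x : Fin n) :
    (G *ᵥ (Pi.single i 1 - Pi.single j 1) + G i j • (Pi.single i 1 - Pi.single j 1) :
      Fin n → ℝ) x ∈ Set.Icc 0 (G x i) := by
  rw [mulVec_single_sub_single_add_smul_apply hG hij]
  split_ifs with hx
  · exact ⟨le_rfl, hG.nonneg x i⟩
  · have hji' : G x j ≤ G x i := by
      rcases hG.zero_or_one x j with h | h
      · rw [h]; exact hG.nonneg x i
      · rw [h, hG.symm.apply i x, hji x (not_or.mp hx).1 ((hG.symm.apply x j).trans h)]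
    constructor <;> linarith [hG.nonneg x j]

theorem walkWeight_add_sum_E_lt (hG : G.IsAdjMatrix) (hij : i ≠ j)
    (hji : ∀ x, x ≠ i → G j x = 1 → G i x = 1) {x₀ : Fin n} (hix₀ : G i x₀ = 1)
    (hjx₀ : G j x₀ = 0) (hx₀j : x₀ ≠ j) (hL : ∀ l ∈ L, l ≠ i ∧ l ≠ j ∧ G i l = 0)
    (hLne : L.Nonempty) (k : ℕ) :
    walkWeight (G + ∑ l ∈ L, E j l) 1 (k + 2) < walkWeight (G + ∑ l ∈ L, E i l) 1 (k + 2) := by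
  have hiL : i ∉ L := fun h => (hL i h).1 rfl
  have hjL : j ∉ L := fun h => (hL j h).2.1 rfl
  have hGiL : ∀ l ∈ L, G i l = 0 := fun l hl => (hL l hl).2.2
  have hGjL : ∀ l ∈ L, G j l = 0 := fun l hl =>
    (hG.zero_or_one j l).resolve_right fun h => by simpa [hGiL l hl] using hji l (hL l hl).1 h
  have hsx := mulVec_single_sub_single_add_smul_apply hG hij
  have hs := mulVec_single_sub_single_add_smul_apply_mem_Icc hG hij hji
  set s := G *ᵥ (Pi.single i 1 - Pi.single j 1) + G i j • (Pi.single i 1 - Pi.single j 1)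
  refine walkWeight_lt_walkWeight (isAdjMatrix_add_sum_E hG hiL hGiL)
    (isAdjMatrix_add_sum_E hG hjL hGjL) (add_sum_E_sub_add_sum_E hiL hjL) ?hAu ?hBu ?hu
    (hG.nonneg i j) (hG.le_one i j) (fun x => (hs x).1) ?hf ?hsA ?hfA ?hfB ?hs1 ?hf1 k
  case hAu =>
    rw [add_sum_E_mulVec hiL hiL hjL, add_sub_cancel_right]
    simp [hij]
  case hBu =>
    rw [add_sum_E_mulVec hjL hiL hjL, add_sub_cancel_right]
    simp [hij.symm, sub_eq_add_neg]
  case hu => simp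
  case hf => intro x; dsimp only; split_ifs <;> norm_num
  case hsA =>
    intro x hx
    have hxi : G x i = 1 :=
      (hG.zero_or_one x i).resolve_left fun h => hx (le_antisymm (h ▸ (hs x).2) (hs x).1)
    have hxL : x ∉ L := fun hxL =>
      one_ne_zero (hxi.symm.trans ((hG.symm.apply i x).trans (hGiL x hxL)))
    exact ⟨i, by rw [add_sum_E_apply_self_right hiL, hxi, if_neg hxL, add_zero]⟩
  case hfA =>
    intro x hx
    have hxL : x ∈ L := by by_contra h; simp [h] at hx
    exact ⟨i, by rw [add_sum_E_apply_self_right hiL, if_pos hxL,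
      (hG.symm.apply i x).trans (hGiL x hxL), zero_add]⟩
  case hfB =>
    intro x hx
    have hxL : x ∈ L := by by_contra h; simp [h] at hx
    exact ⟨j, by rw [add_sum_E_apply_self_right hjL, if_pos hxL,
      (hG.symm.apply j x).trans (hGjL x hxL), zero_add]⟩
  case hs1 =>
    have hx₀i : x₀ ≠ i := by rintro rfl; simp [hG.apply_diag] at hix₀
    have hsx₀ : s x₀ = 1 := by
      rw [hsx, if_neg (by tauto), hG.symm.apply i x₀, hix₀, hG.symm.apply j x₀, hjx₀, sub_zero]
    rw [dotProduct_one]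
    exact one_pos.trans_le (hsx₀ ▸ single_le_sum (fun x _ => (hs x).1) (mem_univ x₀))
  case hf1 => simpa [dotProduct_one] using hLne

end Swap

theorem stmt0 {n : ℕ} (G : Matrix (Fin n) (Fin n) ℝ) (hG : G.IsAdjMatrix)
    (i j : Fin n) (hij : i ≠ j)
    (hnest : Nbr G j \ {i} ⊂ Nbr G i \ {j})
    (L : Finset (Fin n)) (hLne : L.Nonempty)
    (hL : ∀ l ∈ L, l ≠ i ∧ l ≠ j ∧ G i l = 0) :
    ∀ k : ℕ, 2 ≤ k →
      ∑ u, ∑ v, ((G + ∑ l ∈ L, E j l) ^ k) u v <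
        ∑ u, ∑ v, ((G + ∑ l ∈ L, E i l) ^ k) u v := by
  intro k hk
  obtain ⟨k, rfl⟩ := Nat.exists_eq_add_of_le' hk
  obtain ⟨x₀, ⟨hix₀, hx₀j⟩, hx₀⟩ := Set.exists_of_ssubset hnest
  have hji : ∀ x, x ≠ i → G j x = 1 → G i x = 1 := fun x hx h => (hnest.1 ⟨h, hx⟩).1
  have hx₀i : x₀ ≠ i := by
    rintro rfl
    exact one_ne_zero (hix₀.symm.trans (hG.apply_diag x₀))
  have hjx₀ : G j x₀ = 0 := (hG.zero_or_one j x₀).resolve_right fun h => hx₀ ⟨h, hx₀i⟩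
  rw [← walkWeight_one_eq_sum, ← walkWeight_one_eq_sum]
  exact walkWeight_add_sum_E_lt hG hij hji hix₀ hjx₀ hx₀j hL hLne k
end

section
/- Let G be a graph and i, j distinct nodes such that neither N_i(G)\{j} ⊆ N_j(G)\{i} nor N_j(G)\{i} ⊆ N_i(G)\{j}. Let L = {l ∉ {i,j} : g_{il} = 0 and g_{jl} = 1} be the set of j's neighbors that are not i's neighbors, and let Ĝ = G + Σ_{l∈L} E_{il} − Σ_{l∈L} E_{jl} be the graph obtained by reallocating all neighbors in L from j to i. Then L is nonempty, Ĝ is a valid simple graph with the same number of edges as G, and 1'G^k 1 < 1'Ĝ^k 1 for every integer k ≥ 2. -/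
open Matrix BigOperators

/-!
Write `g_k = G^k 1` and `h_k = Ĝ^k 1` for the vectors of walk counts, so that
`1'G^k 1 = Σ_v g_k v`. Outside `{i, j}` the rows of `i` and `j` in `Ĝ` are the union and the
intersection of the neighbourhoods of `i` and `j` in `G`, and the rest of the graph is untouched.
By induction on `k`, `g_k ≤ h_k` off `{i, j}`, while on `{i, j}` the pair `(h_k i, h_k j)`
dominates `(g_k i, g_k j)`: `h_k i ≥ max (g_k i) (g_k j)` and `h_k i + h_k j ≥ g_k i + g_k j`.
For the strict inequality, a private neighbour `a` of `i` forces `h_k i - g_k j ≥ 1` for odd `k`;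
a private neighbour `b` of `j` carries this gain to `b` one step later, and from `b` back to the
pair `{i, j}` another step later. Since one of `k - 1`, `k - 2` is odd, the total gain at length
`k ≥ 2` is positive.
-/

lemma mul_add_mul_le_max_mul_add_min_mul {a b x y X Y : ℝ} (ha : 0 ≤ a) (hb : 0 ≤ b)
    (hx : x ≤ X) (hy : y ≤ X) (hxy : x + y ≤ X + Y) :
    a * x + b * y ≤ max a b * X + min a b * Y := by
  rcases le_total a b with h | h
  · rw [max_eq_right h, min_eq_left h]
    nlinarith
  · rw [max_eq_left h, min_eq_right h]
    nlinarith

namespace Matrix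

variable {V : Type*}

lemma IsAdjMatrix.apply_nonneg {A : Matrix V V ℝ} (hA : A.IsAdjMatrix) (u v : V) :
    0 ≤ A u v := by
  rcases hA.zero_or_one u v with h | h <;> simp [h]

/-- `H` arises from `G` by the Kelmans transformation moving the neighbours of `j` to `i`:
outside `{i, j}`, the rows of `i` and `j` become the union and the intersection of the two
neighbourhoods. -/
structure IsKelmansShift (G H : Matrix V V ℝ) (i j : V) : Prop where
  isSymm : H.IsSymm
  apply_left_left : H i i = G i i
  apply_right_right : H j j = G j j
  apply_left_right : H i j = G i j
  apply_left : ∀ ⦃v⦄, v ≠ i → v ≠ j → H i v = max (G i v) (G j v)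
  apply_right : ∀ ⦃v⦄, v ≠ i → v ≠ j → H j v = min (G i v) (G j v)
  apply_of_ne : ∀ ⦃u v⦄, u ≠ i → u ≠ j → v ≠ i → v ≠ j → H u v = G u v

theorem IsKelmansShift.isAdjMatrix {G H : Matrix V V ℝ} {i j : V}
    (hK : IsKelmansShift G H i j) (hG : G.IsAdjMatrix) : H.IsAdjMatrix where
  zero_or_one u v := by
    have row : ∀ v, (H i v = 0 ∨ H i v = 1) ∧ (H j v = 0 ∨ H j v = 1) := by
      intro v
      by_cases hi : v = i
      · rw [hi, hK.apply_left_left, ← hK.isSymm.apply, hK.apply_left_right]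
        exact ⟨hG.zero_or_one i i, hG.zero_or_one i j⟩
      by_cases hj : v = j
      · rw [hj, hK.apply_left_right, hK.apply_right_right]
        exact ⟨hG.zero_or_one i j, hG.zero_or_one j j⟩
      rw [hK.apply_left hi hj, hK.apply_right hi hj]
      constructor
      · rcases max_choice (G i v) (G j v) with h | h <;> rw [h] <;> exact hG.zero_or_one _ _
      · rcases min_choice (G i v) (G j v) with h | h <;> rw [h] <;> exact hG.zero_or_one _ _
    by_cases hui : u = i
    · exact hui ▸ (row v).1
    by_cases huj : u = j
    · exact huj ▸ (row v).2
    by_cases hvi : v = i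
    · exact hvi ▸ hK.isSymm.apply u i ▸ (row u).1
    by_cases hvj : v = j
    · exact hvj ▸ hK.isSymm.apply u j ▸ (row u).2
    rw [hK.apply_of_ne hui huj hvi hvj]
    exact hG.zero_or_one u v
  symm := hK.isSymm
  apply_diag u := by
    by_cases hi : u = i
    · rw [hi, hK.apply_left_left, hG.apply_diag]
    by_cases hj : u = j
    · rw [hj, hK.apply_right_right, hG.apply_diag]
    rw [hK.apply_of_ne hi hj hi hj, hG.apply_diag]

variable [Fintype V] [DecidableEq V]

def walkCount (A : Matrix V V ℝ) (k : ℕ) : V → ℝ := A ^ k *ᵥ 1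

section WalkCount

variable {A : Matrix V V ℝ}

@[simp]
lemma walkCount_zero (A : Matrix V V ℝ) : walkCount A 0 = 1 := by
  simp [walkCount]

lemma walkCount_succ (A : Matrix V V ℝ) (k : ℕ) :
    walkCount A (k + 1) = A *ᵥ walkCount A k := by
  rw [walkCount, walkCount, pow_succ', mulVec_mulVec]

lemma sum_walkCount (A : Matrix V V ℝ) (k : ℕ) :
    ∑ u, walkCount A k u = ∑ u, ∑ v, (A ^ k) u v := by
  simp [walkCount, mulVec, dotProduct]

lemma IsAdjMatrix.walkCount_nonneg (hA : A.IsAdjMatrix) (k : ℕ) (v : V) :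
    0 ≤ walkCount A k v := by
  induction k generalizing v with
  | zero => simp
  | succ k ih =>
    rw [walkCount_succ]
    exact Finset.sum_nonneg fun u _ => mul_nonneg (hA.apply_nonneg v u) (ih u)

lemma IsAdjMatrix.walkCount_le_succ (hA : A.IsAdjMatrix) {u v : V} (huv : A u v = 1) (k : ℕ) :
    walkCount A k v ≤ walkCount A (k + 1) v := by
  induction k generalizing u v with
  | zero =>
    rw [walkCount_succ, walkCount_zero]
    calc (1 : ℝ) = A v u * 1 := by rw [hA.symm.apply u v, huv, one_mul]
      _ ≤ ∑ w, A v w * (1 : V → ℝ) w :=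
        Finset.single_le_sum (f := fun w => A v w * (1 : V → ℝ) w)
          (fun w _ => by simpa using hA.apply_nonneg v w) (Finset.mem_univ u)
  | succ k ih =>
    calc walkCount A (k + 1) v = (A *ᵥ walkCount A k) v := by rw [walkCount_succ]
      _ ≤ (A *ᵥ walkCount A (k + 1)) v := Finset.sum_le_sum fun w _ => ?_
      _ = walkCount A (k + 1 + 1) v := by rw [walkCount_succ A (k + 1)]
    rcases hA.zero_or_one v w with h | h
    · simp [h]
    · simpa [h] using ih h

lemma IsAdjMatrix.one_le_walkCount (hA : A.IsAdjMatrix) {u v : V} (huv : A u v = 1) (k : ℕ) :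
    1 ≤ walkCount A k v := by
  induction k with
  | zero => simp
  | succ k ih => exact ih.trans (hA.walkCount_le_succ huv k)

lemma IsAdjMatrix.max_sub_mul_walkCount_le (hA : A.IsAdjMatrix) (p q v : V) (k : ℕ) :
    (max (A p v) (A q v) - A p v) * walkCount A k v
      ≤ (max (A p v) (A q v) - A p v) * walkCount A (k + 1) v := by
  rcases hA.zero_or_one q v with h | h
  · simp [h, max_eq_left (hA.apply_nonneg p v)]
  · exact mul_le_mul_of_nonneg_left (hA.walkCount_le_succ h k) (sub_nonneg.2 (le_max_left _ _))

end WalkCount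

/-- The slack fields matter only when `G i j = 1`: then `h_k j` may fall below `g_k j` and
`g_k i`, and the slack says that this loss is paid for by the walks from the private neighbours
of `j` (weight `max - G i`), resp. of `i` (weight `max - G j`). -/
structure WalkCountDominance (G H : Matrix V V ℝ) (i j : V) (k : ℕ) : Prop where
  le_of_mem_compl : ∀ v ∈ ({i, j} : Finset V)ᶜ, walkCount G k v ≤ walkCount H k v
  add_le_add : walkCount G k i + walkCount G k j ≤ walkCount H k i + walkCount H k j
  left_le_left : walkCount G k i ≤ walkCount H k i
  right_le_left : walkCount G k j ≤ walkCount H k i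
  left_slack_nonneg : 0 ≤ ∑ v ∈ ({i, j} : Finset V)ᶜ,
      (max (G i v) (G j v) - G i v) * walkCount G k v + G i j * (walkCount H k j - walkCount G k j)
  right_slack_nonneg : 0 ≤ ∑ v ∈ ({i, j} : Finset V)ᶜ,
      (max (G i v) (G j v) - G j v) * walkCount G k v + G i j * (walkCount H k j - walkCount G k i)

variable {i j : V}

local notation "𝒪" => (insert i (singleton j : Finset V))ᶜ

lemma mem_compl_pair {v : V} : v ∈ 𝒪 ↔ v ≠ i ∧ v ≠ j := by
  simp

lemma sum_eq_add_add_sum_compl_pair (hij : i ≠ j) (f : V → ℝ) :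
    ∑ v, f v = f i + f j + ∑ v ∈ 𝒪, f v := by
  rw [← Finset.sum_add_sum_compl {i, j}, Finset.sum_pair hij]

section Recurrences

variable {A G H : Matrix V V ℝ}

lemma IsAdjMatrix.mulVec_apply_left (hA : A.IsAdjMatrix) (hij : i ≠ j) (x : V → ℝ) :
    (A *ᵥ x) i = A i j * x j + ∑ v ∈ 𝒪, A i v * x v := by
  rw [mulVec, dotProduct, sum_eq_add_add_sum_compl_pair hij, hA.apply_diag, zero_mul, zero_add]

lemma IsAdjMatrix.mulVec_apply_right (hA : A.IsAdjMatrix) (hij : i ≠ j) (x : V → ℝ) :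
    (A *ᵥ x) j = A i j * x i + ∑ v ∈ 𝒪, A j v * x v := by
  rw [mulVec, dotProduct, sum_eq_add_add_sum_compl_pair hij, hA.apply_diag, hA.symm.apply,
    zero_mul, add_zero]

lemma IsSymm.mulVec_apply_eq_add_add_sum_compl (hA : A.IsSymm) (hij : i ≠ j) (x : V → ℝ)
    (v : V) : (A *ᵥ x) v = A i v * x i + A j v * x j + ∑ u ∈ 𝒪, A v u * x u := by
  rw [mulVec, dotProduct, sum_eq_add_add_sum_compl_pair hij, hA.apply i v, hA.apply j v]

namespace IsKelmansShift

lemma mulVec_apply_left (hK : IsKelmansShift G H i j) (hG : G.IsAdjMatrix) (hij : i ≠ j)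
    (y : V → ℝ) : (H *ᵥ y) i = G i j * y j + ∑ v ∈ 𝒪, max (G i v) (G j v) * y v := by
  rw [(hK.isAdjMatrix hG).mulVec_apply_left hij, hK.apply_left_right]
  congr 1
  refine Finset.sum_congr rfl fun v hv => ?_
  rw [mem_compl_pair] at hv
  rw [hK.apply_left hv.1 hv.2]

lemma mulVec_apply_right (hK : IsKelmansShift G H i j) (hG : G.IsAdjMatrix) (hij : i ≠ j)
    (y : V → ℝ) : (H *ᵥ y) j = G i j * y i + ∑ v ∈ 𝒪, min (G i v) (G j v) * y v := by
  rw [(hK.isAdjMatrix hG).mulVec_apply_right hij, hK.apply_left_right]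
  congr 1
  refine Finset.sum_congr rfl fun v hv => ?_
  rw [mem_compl_pair] at hv
  rw [hK.apply_right hv.1 hv.2]

lemma mulVec_apply_of_mem_compl (hK : IsKelmansShift G H i j) (hij : i ≠ j) (y : V → ℝ)
    {v : V} (hv : v ∈ 𝒪) :
    (H *ᵥ y) v = max (G i v) (G j v) * y i + min (G i v) (G j v) * y j
      + ∑ u ∈ 𝒪, G v u * y u := by
  rw [mem_compl_pair] at hv
  rw [hK.isSymm.mulVec_apply_eq_add_add_sum_compl hij, hK.apply_left hv.1 hv.2,
    hK.apply_right hv.1 hv.2]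
  congr 1
  refine Finset.sum_congr rfl fun u hu => ?_
  rw [mem_compl_pair] at hu
  rw [hK.apply_of_ne hv.1 hv.2 hu.1 hu.2]

end IsKelmansShift

end Recurrences

section Dominance

variable {G H : Matrix V V ℝ}

lemma IsAdjMatrix.one_le_sum_max_sub_mul_walkCount (hG : G.IsAdjMatrix) {a : V} (haj : a ≠ j)
    (hia : G i a = 1) (hja : G j a = 0) (k : ℕ) :
    1 ≤ ∑ v ∈ 𝒪, (max (G i v) (G j v) - G j v) * walkCount G k v := by
  have hai : a ≠ i := by
    rintro rfl
    simp [hG.apply_diag] at hia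
  calc (1 : ℝ) ≤ (max (G i a) (G j a) - G j a) * walkCount G k a := by
        simpa [hia, hja] using hG.one_le_walkCount hia k
    _ ≤ _ := Finset.single_le_sum (f := fun v => (max (G i v) (G j v) - G j v) * walkCount G k v)
        (fun v _ => mul_nonneg (sub_nonneg.2 (le_max_right _ _)) (hG.walkCount_nonneg k v))
        (mem_compl_pair.2 ⟨hai, haj⟩)

namespace IsKelmansShift

section Step

variable {k : ℕ}

lemma sub_le_walkCount_succ_sub_of_mem_compl (hK : IsKelmansShift G H i j)
    (hG : G.IsAdjMatrix) (hij : i ≠ j) (hk : ∀ u ∈ 𝒪, walkCount G k u ≤ walkCount H k u)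
    {v : V} (hv : v ∈ 𝒪) :
    max (G i v) (G j v) * walkCount H k i + min (G i v) (G j v) * walkCount H k j
        - (G i v * walkCount G k i + G j v * walkCount G k j)
      ≤ walkCount H (k + 1) v - walkCount G (k + 1) v := by
  rw [walkCount_succ, walkCount_succ, hK.mulVec_apply_of_mem_compl hij _ hv,
    hG.symm.mulVec_apply_eq_add_add_sum_compl hij]
  have := Finset.sum_le_sum fun u hu => mul_le_mul_of_nonneg_left (hk u hu) (hG.apply_nonneg v u)
  linarith

lemma sum_mul_sub_le_walkCount_succ_add_sub (hK : IsKelmansShift G H i j)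
    (hG : G.IsAdjMatrix) (hij : i ≠ j)
    (hk : walkCount G k i + walkCount G k j ≤ walkCount H k i + walkCount H k j) :
    ∑ v ∈ 𝒪, (G i v + G j v) * (walkCount H k v - walkCount G k v)
      ≤ walkCount H (k + 1) i + walkCount H (k + 1) j
        - (walkCount G (k + 1) i + walkCount G (k + 1) j) := by
  rw [walkCount_succ, walkCount_succ, hK.mulVec_apply_left hG hij, hK.mulVec_apply_right hG hij,
    hG.mulVec_apply_left hij, hG.mulVec_apply_right hij]
  have key : ∀ v, (G i v + G j v) * (walkCount H k v - walkCount G k v)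
      = max (G i v) (G j v) * walkCount H k v + min (G i v) (G j v) * walkCount H k v
        - (G i v * walkCount G k v + G j v * walkCount G k v) := by
    intro v
    rw [← add_mul, max_add_min]
    ring
  simp only [key, Finset.sum_sub_distrib, Finset.sum_add_distrib]
  nlinarith [hG.apply_nonneg i j]

lemma left_slack_le_walkCount_succ_sub (hK : IsKelmansShift G H i j) (hG : G.IsAdjMatrix)
    (hij : i ≠ j) (hk : ∀ u ∈ 𝒪, walkCount G k u ≤ walkCount H k u) :
    ∑ v ∈ 𝒪, (max (G i v) (G j v) - G i v) * walkCount G k v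
        + G i j * (walkCount H k j - walkCount G k j)
      ≤ walkCount H (k + 1) i - walkCount G (k + 1) i := by
  rw [walkCount_succ, walkCount_succ, hK.mulVec_apply_left hG hij, hG.mulVec_apply_left hij]
  have := Finset.sum_le_sum fun v hv =>
    show (max (G i v) (G j v) - G i v) * walkCount G k v + G i v * walkCount G k v
        ≤ max (G i v) (G j v) * walkCount H k v by
      rw [sub_mul, sub_add_cancel]
      exact mul_le_mul_of_nonneg_left (hk v hv) (le_max_of_le_left (hG.apply_nonneg i v))
  rw [Finset.sum_add_distrib] at this
  linarith

lemma right_slack_le_walkCount_succ_sub (hK : IsKelmansShift G H i j) (hG : G.IsAdjMatrix)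
    (hij : i ≠ j) (hk : ∀ u ∈ 𝒪, walkCount G k u ≤ walkCount H k u) :
    ∑ v ∈ 𝒪, (max (G i v) (G j v) - G j v) * walkCount G k v
        + G i j * (walkCount H k j - walkCount G k i)
      ≤ walkCount H (k + 1) i - walkCount G (k + 1) j := by
  rw [walkCount_succ, walkCount_succ, hK.mulVec_apply_left hG hij, hG.mulVec_apply_right hij]
  have := Finset.sum_le_sum fun v hv =>
    show (max (G i v) (G j v) - G j v) * walkCount G k v + G j v * walkCount G k v
        ≤ max (G i v) (G j v) * walkCount H k v by
      rw [sub_mul, sub_add_cancel]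
      exact mul_le_mul_of_nonneg_left (hk v hv) (le_max_of_le_left (hG.apply_nonneg i v))
  rw [Finset.sum_add_distrib] at this
  linarith

lemma left_slack_succ_nonneg (hK : IsKelmansShift G H i j) (hG : G.IsAdjMatrix)
    (hij : i ≠ j) (hk : ∀ u ∈ 𝒪, walkCount G k u ≤ walkCount H k u)
    (hki : walkCount G k i ≤ walkCount H k i) :
    0 ≤ ∑ v ∈ 𝒪, (max (G i v) (G j v) - G i v) * walkCount G (k + 1) v
        + G i j * (walkCount H (k + 1) j - walkCount G (k + 1) j) := by
  rcases hG.zero_or_one i j with hc | hc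
  · rw [hc, zero_mul, add_zero]
    exact Finset.sum_nonneg fun v _ =>
      mul_nonneg (sub_nonneg.2 (le_max_left _ _)) (hG.walkCount_nonneg _ v)
  rw [hc, one_mul, walkCount_succ H, hK.mulVec_apply_right hG hij,
    congrFun (walkCount_succ G k) j, hG.mulVec_apply_right hij, hc]
  have := Finset.sum_le_sum fun v hv =>
    calc G j v * walkCount G k v
        = (max (G i v) (G j v) - G i v) * walkCount G k v
          + min (G i v) (G j v) * walkCount G k v := by
          rw [← add_mul]
          congr 1
          linarith [min_add_max (G i v) (G j v)]
      _ ≤ (max (G i v) (G j v) - G i v) * walkCount G (k + 1) v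
          + min (G i v) (G j v) * walkCount H k v :=
        add_le_add (hG.max_sub_mul_walkCount_le i j v k) (mul_le_mul_of_nonneg_left (hk v hv)
          (le_min (hG.apply_nonneg i v) (hG.apply_nonneg j v)))
  rw [Finset.sum_add_distrib] at this
  linarith

lemma min_le_right_slack_succ (hK : IsKelmansShift G H i j) (hG : G.IsAdjMatrix)
    (hij : i ≠ j) (hk : ∀ u ∈ 𝒪, walkCount G k u ≤ walkCount H k u) :
    min (walkCount H k i - walkCount G k j)
        (∑ v ∈ 𝒪, (max (G i v) (G j v) - G j v) * walkCount G (k + 1) v)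
      ≤ ∑ v ∈ 𝒪, (max (G i v) (G j v) - G j v) * walkCount G (k + 1) v
        + G i j * (walkCount H (k + 1) j - walkCount G (k + 1) i) := by
  rcases hG.zero_or_one i j with hc | hc
  · rw [hc, zero_mul, add_zero]
    exact min_le_right _ _
  refine min_le_of_left_le ?_
  rw [hc, one_mul, walkCount_succ H, hK.mulVec_apply_right hG hij,
    congrFun (walkCount_succ G k) i, hG.mulVec_apply_left hij, hc]
  have := Finset.sum_le_sum fun v hv =>
    calc G i v * walkCount G k v
        = (max (G i v) (G j v) - G j v) * walkCount G k v
          + min (G i v) (G j v) * walkCount G k v := by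
          rw [← add_mul]
          congr 1
          linarith [min_add_max (G i v) (G j v)]
      _ ≤ (max (G i v) (G j v) - G j v) * walkCount G (k + 1) v
          + min (G i v) (G j v) * walkCount H k v :=
        add_le_add (max_comm (G j v) (G i v) ▸ hG.max_sub_mul_walkCount_le j i v k)
          (mul_le_mul_of_nonneg_left (hk v hv)
            (le_min (hG.apply_nonneg i v) (hG.apply_nonneg j v)))
  rw [Finset.sum_add_distrib] at this
  linarith

end Step

theorem walkCountDominance (hK : IsKelmansShift G H i j) (hG : G.IsAdjMatrix) (hij : i ≠ j) :
    ∀ k, WalkCountDominance G H i j k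
  | 0 =>
    { le_of_mem_compl := by simp
      add_le_add := by simp
      left_le_left := by simp
      right_le_left := by simp
      left_slack_nonneg := by
        simpa using Finset.sum_nonneg fun v _ => sub_nonneg.2 (le_max_left (G i v) (G j v))
      right_slack_nonneg := by
        simpa using Finset.sum_nonneg fun v _ => sub_nonneg.2 (le_max_right (G i v) (G j v)) }
  | k + 1 => by
    have hk := walkCountDominance hK hG hij k
    have hslack : 0 ≤ ∑ v ∈ 𝒪, (max (G i v) (G j v) - G j v) * walkCount G (k + 1) v :=
      Finset.sum_nonneg fun v _ =>
        mul_nonneg (sub_nonneg.2 (le_max_right _ _)) (hG.walkCount_nonneg _ v)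
    exact
    { le_of_mem_compl := fun v hv => by
        have := mul_add_mul_le_max_mul_add_min_mul (hG.apply_nonneg i v) (hG.apply_nonneg j v)
          hk.left_le_left hk.right_le_left hk.add_le_add
        linarith [hK.sub_le_walkCount_succ_sub_of_mem_compl hG hij hk.le_of_mem_compl hv]
      add_le_add := by
        have : 0 ≤ ∑ v ∈ 𝒪, (G i v + G j v) * (walkCount H k v - walkCount G k v) :=
          Finset.sum_nonneg fun v hv => mul_nonneg
            (add_nonneg (hG.apply_nonneg i v) (hG.apply_nonneg j v))
            (sub_nonneg.2 (hk.le_of_mem_compl v hv))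
        linarith [hK.sum_mul_sub_le_walkCount_succ_add_sub hG hij hk.add_le_add]
      left_le_left := by
        linarith [hK.left_slack_le_walkCount_succ_sub hG hij hk.le_of_mem_compl,
          hk.left_slack_nonneg]
      right_le_left := by
        linarith [hK.right_slack_le_walkCount_succ_sub hG hij hk.le_of_mem_compl,
          hk.right_slack_nonneg]
      left_slack_nonneg :=
        hK.left_slack_succ_nonneg hG hij hk.le_of_mem_compl hk.left_le_left
      right_slack_nonneg :=
        (le_min (sub_nonneg.2 hk.right_le_left) hslack).trans
          (hK.min_le_right_slack_succ hG hij hk.le_of_mem_compl) }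

lemma one_le_walkCount_left_sub_right_odd (hK : IsKelmansShift G H i j) (hG : G.IsAdjMatrix)
    (hij : i ≠ j) {a : V} (haj : a ≠ j) (hia : G i a = 1) (hja : G j a = 0) :
    ∀ t, 1 ≤ walkCount H (2 * t + 1) i - walkCount G (2 * t + 1) j
  | 0 => by
    have h₁ := hK.right_slack_le_walkCount_succ_sub hG hij (hK.walkCountDominance hG hij 0).1
    have h₂ := hG.one_le_sum_max_sub_mul_walkCount haj hia hja 0
    simp only [walkCount_zero, Pi.one_apply, sub_self, mul_zero, add_zero] at h₁ h₂
    linarith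
  | t + 1 => by
    have h₁ := hK.right_slack_le_walkCount_succ_sub hG hij
      (hK.walkCountDominance hG hij (2 * t + 2)).le_of_mem_compl
    have h₂ := hK.min_le_right_slack_succ hG hij
      (hK.walkCountDominance hG hij (2 * t + 1)).le_of_mem_compl
    have h₃ := le_min (one_le_walkCount_left_sub_right_odd hK hG hij haj hia hja t)
      (hG.one_le_sum_max_sub_mul_walkCount haj hia hja (2 * t + 1 + 1))
    rw [show 2 * (t + 1) + 1 = 2 * t + 2 + 1 by ring]
    linarith

theorem sum_walkCount_lt (hK : IsKelmansShift G H i j) (hG : G.IsAdjMatrix) (hij : i ≠ j)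
    {a b : V} (haj : a ≠ j) (hia : G i a = 1) (hja : G j a = 0)
    (hbi : b ≠ i) (hib : G i b = 0) (hjb : G j b = 1) {k : ℕ} (hk : 2 ≤ k) :
    ∑ v, walkCount G k v < ∑ v, walkCount H k v := by
  obtain ⟨m, rfl⟩ : ∃ m, k = m + 2 := ⟨k - 2, by omega⟩
  have hD := hK.walkCountDominance hG hij
  have hb : b ∈ 𝒪 := mem_compl_pair.2 ⟨hbi, by rintro rfl; simp [hG.apply_diag] at hjb⟩
  have hgain : ∀ k, walkCount H k i - walkCount G k j
      ≤ walkCount H (k + 1) b - walkCount G (k + 1) b := fun k => by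
    simpa [hib, hjb] using hK.sub_le_walkCount_succ_sub_of_mem_compl hG hij (hD k).1 hb
  have hpair : walkCount H (m + 1) b - walkCount G (m + 1) b
      ≤ walkCount H (m + 2) i + walkCount H (m + 2) j
        - (walkCount G (m + 2) i + walkCount G (m + 2) j) := by
    refine le_trans ?_ (hK.sum_mul_sub_le_walkCount_succ_add_sub hG hij (hD (m + 1)).add_le_add)
    simpa [hib, hjb] using Finset.single_le_sum (fun v hv => mul_nonneg
      (add_nonneg (hG.apply_nonneg i v) (hG.apply_nonneg j v))
      (sub_nonneg.2 ((hD (m + 1)).1 v hv))) hb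
  have hout : walkCount H (m + 2) b - walkCount G (m + 2) b
      ≤ ∑ v ∈ 𝒪, walkCount H (m + 2) v - ∑ v ∈ 𝒪, walkCount G (m + 2) v := by
    rw [← Finset.sum_sub_distrib]
    exact Finset.single_le_sum (f := fun v => walkCount H (m + 2) v - walkCount G (m + 2) v)
      (fun v hv => sub_nonneg.2 ((hD (m + 2)).1 v hv)) hb
  -- `h_k i - g_k j` can vanish for even `k`, so two consecutive lengths are needed.
  have hodd : 1 ≤ (walkCount H m i - walkCount G m j)
      + (walkCount H (m + 1) i - walkCount G (m + 1) j) := by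
    have h₀ := (hD m).right_le_left
    have h₁ := (hD (m + 1)).right_le_left
    obtain ⟨t, rfl | rfl⟩ := Nat.even_or_odd' m <;>
      linarith [hK.one_le_walkCount_left_sub_right_odd hG hij haj hia hja t]
  rw [sum_eq_add_add_sum_compl_pair hij, sum_eq_add_add_sum_compl_pair hij]
  linarith [hgain m, hgain (m + 1)]

end IsKelmansShift

end Dominance

end Matrix

section ElementaryMatrices

variable {n : ℕ}

lemma E_apply_of_ne {a b : Fin n} (hab : a ≠ b) (u v : Fin n) :
    E a b u v = (if u = a ∧ v = b then 1 else 0) + (if u = b ∧ v = a then 1 else 0) := by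
  by_cases h : u = a ∧ v = b
  · obtain ⟨rfl, rfl⟩ := h
    simp [E, hab]
  · simp [E, h]

lemma sum_E_apply {c : Fin n} {L : Finset (Fin n)} (hc : c ∉ L) (u v : Fin n) :
    (∑ l ∈ L, E c l) u v
      = (if u = c ∧ v ∈ L then 1 else 0) + (if v = c ∧ u ∈ L then 1 else 0) := by
  rw [Matrix.sum_apply,
    Finset.sum_congr rfl fun l hl => E_apply_of_ne (ne_of_mem_of_not_mem hl hc).symm u v,
    Finset.sum_add_distrib]
  by_cases hu : u = c <;> by_cases hv : v = c <;> simp [hu, hv, Finset.sum_ite_eq]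

lemma sum_sum_E {a b : Fin n} (hab : a ≠ b) : ∑ u, ∑ v, E a b u v = 2 := by
  simp [E_apply_of_ne hab, Finset.sum_add_distrib, ite_and]
  norm_num

lemma sum_sum_sum_E {c : Fin n} {L : Finset (Fin n)} (hc : c ∉ L) :
    ∑ u, ∑ v, (∑ l ∈ L, E c l) u v = 2 * L.card := by
  simp only [Matrix.sum_apply]
  rw [Finset.sum_congr rfl fun u _ => Finset.sum_comm, Finset.sum_comm,
    Finset.sum_congr rfl fun l hl => sum_sum_E (ne_of_mem_of_not_mem hl hc).symm]
  simp [mul_comm]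

theorem isKelmansShift_add_sum_E_sub_sum_E {G : Matrix (Fin n) (Fin n) ℝ}
    (hG : G.IsAdjMatrix) {i j : Fin n} (hij : i ≠ j) {L : Finset (Fin n)}
    (hL : ∀ l, l ∈ L ↔ (l ≠ i ∧ l ≠ j ∧ G i l = 0 ∧ G j l = 1)) :
    G.IsKelmansShift (G + ∑ l ∈ L, E i l - ∑ l ∈ L, E j l) i j := by
  have hiL : i ∉ L := fun h => ((hL i).1 h).1 rfl
  have hjL : j ∉ L := fun h => ((hL j).1 h).2.1 rfl
  have hH : ∀ u v, (G + ∑ l ∈ L, E i l - ∑ l ∈ L, E j l) u v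
      = G u v + ((if u = i ∧ v ∈ L then 1 else 0) + (if v = i ∧ u ∈ L then 1 else 0))
        - ((if u = j ∧ v ∈ L then 1 else 0) + (if v = j ∧ u ∈ L then 1 else 0)) := by
    intro u v
    rw [Matrix.sub_apply, Matrix.add_apply, sum_E_apply hiL, sum_E_apply hjL]
  refine
    { isSymm := Matrix.ext fun u v => ?_
      apply_left_left := by simp [hH, hiL]
      apply_right_right := by simp [hH, hjL]
      apply_left_right := by simp [hH, hiL, hjL]
      apply_left := fun v hvi hvj => ?_
      apply_right := fun v hvi hvj => ?_
      apply_of_ne := fun u v hui huj hvi hvj => by simp [hH, hui, huj, hvi, hvj] }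
  · rw [transpose_apply, hH, hH, hG.symm.apply u v]
    ring
  · rcases hG.zero_or_one i v with h₁ | h₁ <;> rcases hG.zero_or_one j v with h₂ | h₂ <;>
      simp [hH, hL, hvi, hvj, hij, h₁, h₂]
  · rcases hG.zero_or_one i v with h₁ | h₁ <;> rcases hG.zero_or_one j v with h₂ | h₂ <;>
      simp [hH, hL, hvi, hvj, hij.symm, h₁, h₂]

lemma exists_private_nbr_of_not_subset {G : Matrix (Fin n) (Fin n) ℝ} (hG : G.IsAdjMatrix)
    {i j : Fin n} (h : ¬ (Nbr G i \ {j} ⊆ Nbr G j \ {i})) :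
    ∃ a, a ≠ i ∧ a ≠ j ∧ G i a = 1 ∧ G j a = 0 := by
  obtain ⟨a, ⟨hia, haj⟩, ha⟩ := Set.not_subset.1 h
  simp only [Nbr, Set.mem_sdiff, Set.mem_ofPred_eq, Set.mem_singleton_iff, not_and,
    not_not] at hia haj ha
  have hai : a ≠ i := by
    rintro rfl
    simp [hG.apply_diag] at hia
  exact ⟨a, hai, haj, hia, (hG.apply_ne_one_iff j a).1 fun h => hai (ha h)⟩

end ElementaryMatrices

theorem stmt1 {n : ℕ} (G : Matrix (Fin n) (Fin n) ℝ) (hG : G.IsAdjMatrix)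
    (i j : Fin n) (hij : i ≠ j)
    (hnotnest₁ : ¬ (Nbr G i \ {j} ⊆ Nbr G j \ {i}))
    (hnotnest₂ : ¬ (Nbr G j \ {i} ⊆ Nbr G i \ {j}))
    (L : Finset (Fin n))
    (hL : ∀ l, l ∈ L ↔ (l ≠ i ∧ l ≠ j ∧ G i l = 0 ∧ G j l = 1)) :
    L.Nonempty ∧
    (G + ∑ l ∈ L, E i l - ∑ l ∈ L, E j l).IsAdjMatrix ∧
    (∑ u, ∑ v, (G + ∑ l ∈ L, E i l - ∑ l ∈ L, E j l) u v = ∑ u, ∑ v, G u v) ∧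
    ∀ k : ℕ, 2 ≤ k →
      ∑ u, ∑ v, (G ^ k) u v <
        ∑ u, ∑ v, ((G + ∑ l ∈ L, E i l - ∑ l ∈ L, E j l) ^ k) u v := by
  obtain ⟨a, -, haj, hia, hja⟩ := exists_private_nbr_of_not_subset hG hnotnest₁
  obtain ⟨b, hbj, hbi, hjb, hib⟩ := exists_private_nbr_of_not_subset hG hnotnest₂
  have hK := isKelmansShift_add_sum_E_sub_sum_E hG hij hL
  refine ⟨⟨b, (hL b).2 ⟨hbi, hbj, hib, hjb⟩⟩, hK.isAdjMatrix hG, ?_, fun k hk => ?_⟩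
  · simp only [Matrix.sub_apply, Matrix.add_apply, Finset.sum_add_distrib,
      Finset.sum_sub_distrib, sum_sum_sum_E (fun h => ((hL i).1 h).1 rfl),
      sum_sum_sum_E (fun h => ((hL j).1 h).2.1 rfl)]
    ring
  · simpa only [sum_walkCount] using hK.sum_walkCount_lt hG hij haj hia hja hbi hib hjb hk
end

section
/- Every extreme point of the convex set S_w of feasible weighted network formation paths is a path of unweighted networks: if s = (G(t))_{t=1}^T ∈ S_w and some G(t) has an entry strictly between 0 and 1 in at least two distinct (unordered) positions, then s is not an extreme point of S_w. -/
open Matrix BigOperators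

/-- The network preceding period `k` along the path `s` (the empty network if `k = 0`). -/
def prevNet {T n : ℕ} (s : Fin T → Matrix (Fin n) (Fin n) ℝ) (k : Fin T) :
    Matrix (Fin n) (Fin n) ℝ :=
  if k.val = 0 then 0 else s ⟨k.val - 1, lt_of_le_of_lt (Nat.sub_le _ _) k.isLt⟩

/-- The set of feasible weighted network formation paths: starting from the empty
network, each period's network is symmetric with zero diagonal and entries in `[0,1]`,
dominates the previous one entrywise, and adds total weight `1'W1 = 2`. -/
def SW (T n : ℕ) : Set (Fin T → Matrix (Fin n) (Fin n) ℝ) :=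
  {s | ∀ k : Fin T,
    (s k).IsSymm ∧ (∀ u, s k u u = 0) ∧ (∀ u v, 0 ≤ s k u v ∧ s k u v ≤ 1) ∧
    (∀ u v, prevNet s k u v ≤ s k u v) ∧
    (∑ u, ∑ v, (s k u v - prevNet s k u v)) = 2}

/-!
Recording a feasible path by its increments on the unordered pairs `e` identifies `S_w`
linearly with the polytope of `T × E` matrices `W ≥ 0` with unit row sums and column sums at
most one (a column sum is the final weight of the link). Bordering `W` as
`[[0, W], [Wᵀ, diag (1 - column sums)]]` gives a doubly stochastic matrix; by Birkhoff it is a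
convex combination of permutation matrices, all of which vanish on the zero block, so `W` is a
convex combination of `0/1` matrices of the same polytope. Hence every feasible path is a
convex combination of feasible paths with integral entries, and an extreme point must be one
of them.
-/

open Finset

section Birkhoff

variable {ι : Type*} [Fintype ι] [DecidableEq ι]

theorem mem_convexHull_permMatrix_support_subset {D : Matrix ι ι ℝ}
    (hD : D ∈ doublyStochastic ℝ ι) :
    D ∈ convexHull ℝ
      {P | ∃ σ : Equiv.Perm ι, σ.permMatrix ℝ = P ∧ ∀ i j, D i j = 0 → P i j = 0} := by
  obtain ⟨w, hw0, hw1, hwD⟩ := exists_eq_sum_perm_of_mem_doublyStochastic hD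
  have hsupp (σ : Equiv.Perm ι) (hσ : w σ ≠ 0) (i j : ι) (hij : D i j = 0) :
      σ.permMatrix ℝ i j = 0 := by
    have hsum : ∑ τ, w τ * τ.permMatrix ℝ i j = 0 := by
      simpa [← hwD, Matrix.sum_apply] using hij
    have hterm := (sum_eq_zero_iff_of_nonneg fun τ _ => mul_nonneg (hw0 τ)
      (nonneg_of_mem_doublyStochastic permMatrix_mem_doublyStochastic)).1 hsum σ (mem_univ σ)
    exact (mul_eq_zero.1 hterm).resolve_left hσ
  have hmem := centerMass_mem_convexHull {σ ∈ (univ : Finset (Equiv.Perm ι)) | w σ ≠ 0}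
    (fun σ _ => hw0 σ) (by rw [sum_filter_ne_zero, hw1]; exact one_pos)
    (s := {P | ∃ σ : Equiv.Perm ι, σ.permMatrix ℝ = P ∧ ∀ i j, D i j = 0 → P i j = 0})
    (z := (·.permMatrix ℝ)) fun σ hσ => ⟨σ, rfl, hsupp σ (mem_filter.1 hσ).2⟩
  rwa [centerMass_filter_ne_zero, centerMass_eq_of_sum_1 _ _ hw1, hwD] at hmem

end Birkhoff

def assignmentPolytope (m ι : Type*) [Fintype m] [Fintype ι] : Set (Matrix m ι ℝ) :=
  {W | (∀ i j, 0 ≤ W i j) ∧ (∀ i, ∑ j, W i j = 1) ∧ ∀ j, ∑ i, W i j ≤ 1}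

section Assignment

variable {m ι : Type*} [Fintype m] [Fintype ι]

theorem convex_assignmentPolytope : Convex ℝ (assignmentPolytope m ι) := by
  rintro W ⟨hW0, hWrow, hWcol⟩ V ⟨hV0, hVrow, hVcol⟩ a b ha hb hab
  refine ⟨fun i j => ?_, fun i => ?_, fun j => ?_⟩
  · simp only [Matrix.add_apply, Matrix.smul_apply, smul_eq_mul]
    have := hW0 i j; have := hV0 i j; positivity
  · simp only [Matrix.add_apply, Matrix.smul_apply, smul_eq_mul, sum_add_distrib, ← mul_sum,
      hWrow, hVrow]
    linarith
  · simp only [Matrix.add_apply, Matrix.smul_apply, smul_eq_mul, sum_add_distrib, ← mul_sum]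
    nlinarith [hWcol j, hVcol j]

variable [DecidableEq m] [DecidableEq ι]

theorem fromBlocks_mem_doublyStochastic {W : Matrix m ι ℝ} (hW : W ∈ assignmentPolytope m ι) :
    fromBlocks 0 W Wᵀ (diagonal fun j => 1 - ∑ i, W i j) ∈ doublyStochastic ℝ (m ⊕ ι) := by
  obtain ⟨hW0, hWrow, hWcol⟩ := hW
  rw [mem_doublyStochastic_iff_sum]
  refine ⟨?_, ?_, ?_⟩
  · rintro (i | j) (i' | j')
    · exact le_rfl
    · exact hW0 i j'
    · exact hW0 i' j
    · simp only [fromBlocks_apply₂₂, diagonal_apply]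
      split_ifs
      · linarith [hWcol j]
      · exact le_rfl
  · rintro (i | j) <;> simp [hWrow, diagonal_apply]
  · rintro (i | j) <;> simp [hWrow, diagonal_apply]

theorem toBlocks₁₂_mem_assignmentPolytope {P : Matrix (m ⊕ ι) (m ⊕ ι) ℝ}
    (hP : P ∈ doublyStochastic ℝ (m ⊕ ι)) (h₁₁ : ∀ i i', P (.inl i) (.inl i') = 0) :
    P.toBlocks₁₂ ∈ assignmentPolytope m ι := by
  refine ⟨fun i j => nonneg_of_mem_doublyStochastic hP, fun i => ?_, fun j => ?_⟩
  · simpa [Fintype.sum_sum_type, h₁₁, toBlocks₁₂] using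
      sum_row_of_mem_doublyStochastic hP (.inl i)
  · have hcol := sum_col_of_mem_doublyStochastic hP (.inr j)
    have : 0 ≤ ∑ j', P (.inr j') (.inr j) :=
      sum_nonneg fun _ _ => nonneg_of_mem_doublyStochastic hP
    rw [Fintype.sum_sum_type] at hcol
    simp only [toBlocks₁₂, of_apply]
    linarith

theorem assignmentPolytope_subset_convexHull :
    assignmentPolytope m ι ⊆
      convexHull ℝ {W ∈ assignmentPolytope m ι | ∀ i j, ∃ k : ℕ, W i j = k} := by
  intro W hW
  have hblocks : IsLinearMap ℝ (toBlocks₁₂ : Matrix (m ⊕ ι) (m ⊕ ι) ℝ → Matrix m ι ℝ) :=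
    ⟨fun _ _ => rfl, fun _ _ => rfl⟩
  have hW' := Set.mem_image_of_mem toBlocks₁₂
    (mem_convexHull_permMatrix_support_subset (fromBlocks_mem_doublyStochastic hW))
  rw [hblocks.image_convexHull, toBlocks_fromBlocks₁₂] at hW'
  refine convexHull_mono ?_ hW'
  rintro _ ⟨_, ⟨σ, rfl, hσ⟩, rfl⟩
  refine ⟨toBlocks₁₂_mem_assignmentPolytope permMatrix_mem_doublyStochastic
    fun i i' => hσ _ _ rfl, fun i j => ⟨if σ (.inl i) = .inr j then 1 else 0, ?_⟩⟩
  simp [toBlocks₁₂, Equiv.Perm.permMatrix, PEquiv.toMatrix_apply, Equiv.toPEquiv_apply]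

end Assignment

abbrev Edge (n : ℕ) := {p : Fin n × Fin n // p.1 < p.2}

namespace Edge

variable {n : ℕ}

def upper (g : Edge n → ℝ) : Matrix (Fin n) (Fin n) ℝ :=
  of fun u v => if h : u < v then g ⟨(u, v), h⟩ else 0

def symExt : (Edge n → ℝ) →ₗ[ℝ] Matrix (Fin n) (Fin n) ℝ where
  toFun g := of fun u v =>
    if h : u < v then g ⟨(u, v), h⟩ else if h : v < u then g ⟨(v, u), h⟩ else 0
  map_add' g g' := by
    ext u v
    simp only [of_apply, Pi.add_apply, Matrix.add_apply]
    split_ifs <;> simp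
  map_smul' c g := by
    ext u v
    simp only [of_apply, Pi.smul_apply, Matrix.smul_apply]
    split_ifs <;> simp

theorem symExt_apply_of_lt (g : Edge n → ℝ) {u v : Fin n} (h : u < v) :
    symExt g u v = g ⟨(u, v), h⟩ := by
  simp [symExt, h]

theorem symExt_apply_self (g : Edge n → ℝ) (u : Fin n) : symExt g u u = 0 := by
  simp [symExt]

theorem isSymm_symExt (g : Edge n → ℝ) : (symExt g).IsSymm := by
  ext u v
  simp only [symExt, LinearMap.coe_mk, AddHom.coe_mk, transpose_apply, of_apply]
  rcases lt_trichotomy u v with h | rfl | h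
  · simp [h, h.not_gt]
  · rfl
  · simp [h, h.not_gt]

theorem symExt_apply_eq_zero_or_exists (g : Edge n → ℝ) (u v : Fin n) :
    symExt g u v = 0 ∨ ∃ e, symExt g u v = g e := by
  simp only [symExt, LinearMap.coe_mk, AddHom.coe_mk, of_apply]
  split_ifs <;> simp

theorem symExt_eq_self {A : Matrix (Fin n) (Fin n) ℝ} (hA : A.IsSymm) (hA₀ : ∀ u, A u u = 0) :
    symExt (fun e => A e.1.1 e.1.2) = A := by
  ext u v
  rcases lt_trichotomy u v with h | rfl | h
  · rw [symExt_apply_of_lt _ h]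
  · rw [symExt_apply_self, hA₀]
  · rw [← (isSymm_symExt _).apply, symExt_apply_of_lt _ h, hA.apply]

theorem sum_upper (g : Edge n → ℝ) : ∑ u, ∑ v, upper g u v = ∑ e, g e := by
  simp only [upper, of_apply]
  rw [← Fintype.sum_prod_type', sum_dite, sum_const_zero, add_zero]
  exact sum_nbij' (fun x => ⟨x.1, (mem_filter.1 x.2).2⟩) (fun e => ⟨e.1, by simpa using e.2⟩)
    (by simp) (by simp) (by simp) (by simp) (by simp)

theorem symExt_eq_upper_add_transpose (g : Edge n → ℝ) : symExt g = upper g + (upper g)ᵀ := by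
  ext u v
  rcases lt_trichotomy u v with h | rfl | h
  · simp [symExt, upper, h, h.not_gt]
  · simp [symExt, upper]
  · simp [symExt, upper, h, h.not_gt]

theorem sum_symExt (g : Edge n → ℝ) : ∑ u, ∑ v, symExt g u v = 2 * ∑ e, g e := by
  simp only [symExt_eq_upper_add_transpose, Matrix.add_apply, transpose_apply, sum_add_distrib]
  rw [sum_comm (f := fun u v => upper g v u), sum_upper]
  ring

end Edge

open Edge

section Paths

variable {T n : ℕ}

theorem prevNet_sum_Iic (d : Fin T → Matrix (Fin n) (Fin n) ℝ) (t : Fin T) :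
    prevNet (fun t => ∑ t' ∈ Iic t, d t') t = ∑ t' ∈ Iio t, d t' := by
  unfold prevNet
  split_ifs with ht
  · rw [eq_comm, sum_eq_zero]
    intro t' ht'
    rw [mem_Iio, Fin.lt_def] at ht'
    omega
  · refine sum_congr ?_ fun _ _ => rfl
    ext t'
    rw [mem_Iic, mem_Iio, Fin.le_def, Fin.lt_def]
    show t'.val ≤ t.val - 1 ↔ _
    omega

theorem sum_Iic_sub_prevNet (d : Fin T → Matrix (Fin n) (Fin n) ℝ) (t : Fin T) :
    ∑ t' ∈ Iic t, d t' - prevNet (fun t => ∑ t' ∈ Iic t, d t') t = d t := by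
  rw [prevNet_sum_Iic, ← Iio_insert, sum_insert notMem_Iio_self, add_sub_cancel_right]

theorem eq_of_forall_sub_prevNet_eq {p q : Fin T → Matrix (Fin n) (Fin n) ℝ}
    (h : ∀ t, p t - prevNet p t = q t - prevNet q t) : p = q := by
  funext ⟨m, hm⟩
  induction m with
  | zero => simpa [prevNet] using h ⟨0, hm⟩
  | succ m ih => simpa [prevNet, ih (Nat.lt_of_succ_lt hm)] using h ⟨m + 1, hm⟩

def cumulativePath : Matrix (Fin T) (Edge n) ℝ →ₗ[ℝ] Fin T → Matrix (Fin n) (Fin n) ℝ where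
  toFun W t := ∑ t' ∈ Iic t, symExt fun e => W t' e
  map_add' W V := by
    ext1 t
    rw [Pi.add_apply, ← sum_add_distrib]
    exact sum_congr rfl fun t' _ => map_add symExt (fun e => W t' e) (fun e => V t' e)
  map_smul' c W := by
    ext1 t
    rw [RingHom.id_apply, Pi.smul_apply, smul_sum]
    exact sum_congr rfl fun t' _ => map_smul symExt c (fun e => W t' e)

theorem cumulativePath_apply (W : Matrix (Fin T) (Edge n) ℝ) (t : Fin T) :
    cumulativePath W t = symExt fun e => ∑ t' ∈ Iic t, W t' e := by
  show ∑ t' ∈ Iic t, symExt (fun e => W t' e) = _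
  rw [← map_sum]
  congr 1
  funext e
  exact sum_apply e _ _

theorem cumulativePath_sub_prevNet (W : Matrix (Fin T) (Edge n) ℝ) (t : Fin T) :
    cumulativePath W t - prevNet (cumulativePath W) t = symExt fun e => W t e :=
  sum_Iic_sub_prevNet _ t

theorem cumulativePath_mem_SW {W : Matrix (Fin T) (Edge n) ℝ}
    (hW : W ∈ assignmentPolytope (Fin T) (Edge n)) : cumulativePath W ∈ SW T n := by
  obtain ⟨hW0, hWrow, hWcol⟩ := hW
  intro t
  refine ⟨?_, fun u => ?_, fun u v => ?_, fun u v => ?_, ?_⟩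
  · rw [cumulativePath_apply]; exact isSymm_symExt _
  · rw [cumulativePath_apply]; exact symExt_apply_self _ u
  · rw [cumulativePath_apply]
    rcases symExt_apply_eq_zero_or_exists (fun e => ∑ t' ∈ Iic t, W t' e) u v with h | ⟨e, h⟩ <;>
      rw [h]
    · exact ⟨le_rfl, zero_le_one⟩
    · exact ⟨sum_nonneg fun t' _ => hW0 t' e, (sum_le_sum_of_subset_of_nonneg (subset_univ _)
        fun t' _ _ => hW0 t' e).trans (hWcol e)⟩
  · rw [← sub_nonneg, ← Matrix.sub_apply, cumulativePath_sub_prevNet]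
    rcases symExt_apply_eq_zero_or_exists (fun e => W t e) u v with h | ⟨e, h⟩ <;> rw [h]
    exact hW0 t e
  · simp_rw [← Matrix.sub_apply, cumulativePath_sub_prevNet, sum_symExt, hWrow]
    norm_num

theorem cumulativePath_apply_natCast {W : Matrix (Fin T) (Edge n) ℝ}
    (hW : ∀ t e, ∃ k : ℕ, W t e = k) (t : Fin T) (u v : Fin n) :
    ∃ k : ℕ, cumulativePath W t u v = k := by
  choose K hK using hW
  rw [cumulativePath_apply]
  rcases symExt_apply_eq_zero_or_exists (fun e => ∑ t' ∈ Iic t, W t' e) u v with h | ⟨e, h⟩ <;>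
    rw [h]
  · exact ⟨0, Nat.cast_zero.symm⟩
  · exact ⟨∑ t' ∈ Iic t, K t' e, by rw [Nat.cast_sum]; exact sum_congr rfl fun t' _ => hK t' e⟩

def increments (s : Fin T → Matrix (Fin n) (Fin n) ℝ) : Matrix (Fin T) (Edge n) ℝ :=
  of fun t e => (s t - prevNet s t) e.1.1 e.1.2

variable {s : Fin T → Matrix (Fin n) (Fin n) ℝ}

theorem isSymm_prevNet (hs : s ∈ SW T n) (t : Fin T) : (prevNet s t).IsSymm := by
  unfold prevNet
  split_ifs
  · exact isSymm_zero
  · exact (hs _).1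

theorem prevNet_apply_self (hs : s ∈ SW T n) (t : Fin T) (u : Fin n) : prevNet s t u u = 0 := by
  unfold prevNet
  split_ifs
  · rfl
  · exact (hs _).2.1 u

theorem symExt_increments (hs : s ∈ SW T n) (t : Fin T) :
    (symExt fun e => increments s t e) = s t - prevNet s t :=
  symExt_eq_self ((hs t).1.sub (isSymm_prevNet hs t))
    fun u => by rw [Matrix.sub_apply, (hs t).2.1 u, prevNet_apply_self hs t u, sub_zero]

theorem cumulativePath_increments (hs : s ∈ SW T n) : cumulativePath (increments s) = s :=
  eq_of_forall_sub_prevNet_eq fun t => by rw [cumulativePath_sub_prevNet, symExt_increments hs]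

theorem increments_mem_assignmentPolytope (hs : s ∈ SW T n) :
    increments s ∈ assignmentPolytope (Fin T) (Edge n) := by
  refine ⟨fun t e => sub_nonneg.2 ((hs t).2.2.2.1 _ _), fun t => ?_, fun e => ?_⟩
  · have h2 := (hs t).2.2.2.2
    simp_rw [← Matrix.sub_apply, ← symExt_increments hs, sum_symExt] at h2
    linarith
  · rcases T.eq_zero_or_pos with rfl | hT
    · simp
    have hIic : Iic (⟨T - 1, Nat.sub_lt hT one_pos⟩ : Fin T) = univ :=
      eq_univ_of_forall fun t => mem_Iic.2 (Fin.le_def.2 (Nat.le_sub_one_of_lt t.2))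
    have hs₁ := ((hs ⟨T - 1, Nat.sub_lt hT one_pos⟩).2.2.1 e.1.1 e.1.2).2
    rwa [← cumulativePath_increments hs, cumulativePath_apply, symExt_apply_of_lt _ e.2,
      hIic] at hs₁

theorem SW_eq_image_cumulativePath :
    SW T n = cumulativePath '' assignmentPolytope (Fin T) (Edge n) := by
  refine Set.Subset.antisymm (fun s hs => ⟨increments s, increments_mem_assignmentPolytope hs,
    cumulativePath_increments hs⟩) ?_
  rintro _ ⟨W, hW, rfl⟩
  exact cumulativePath_mem_SW hW

theorem convex_SW : Convex ℝ (SW T n) :=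
  SW_eq_image_cumulativePath ▸ convex_assignmentPolytope.linear_image cumulativePath

theorem SW_subset_convexHull :
    SW T n ⊆ convexHull ℝ {x ∈ SW T n | ∀ t u v, ∃ k : ℕ, x t u v = k} := by
  intro s hs
  have hs' := Set.mem_image_of_mem cumulativePath
    (assignmentPolytope_subset_convexHull (increments_mem_assignmentPolytope hs))
  rw [LinearMap.image_convexHull, cumulativePath_increments hs] at hs'
  refine convexHull_mono ?_ hs'
  rintro _ ⟨W, ⟨hW, hWnat⟩, rfl⟩
  exact ⟨cumulativePath_mem_SW hW, cumulativePath_apply_natCast hWnat⟩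

theorem extremePoints_SW_subset :
    (SW T n).extremePoints ℝ ⊆ {x | ∀ t u v, ∃ k : ℕ, x t u v = k} := by
  intro x hx
  have hx' := inter_extremePoints_subset_extremePoints_of_subset
    (convexHull_min (Set.sep_subset _ _) convex_SW) ⟨SW_subset_convexHull hx.1, hx⟩
  exact (extremePoints_convexHull_subset hx').2

end Paths

theorem stmt15_general {T n : ℕ} (s : Fin T → Matrix (Fin n) (Fin n) ℝ)
    (k : Fin T) (u v : Fin n)
    (h1 : 0 < s k u v) (h2 : s k u v < 1) :
    s ∉ Set.extremePoints ℝ (SW T n) := by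
  intro hs
  obtain ⟨m, hm⟩ := extremePoints_SW_subset hs k u v
  rw [hm] at h1 h2
  norm_cast at h1 h2
  omega

/-- If a feasible path has, at some period, strictly fractional weight at two distinct
unordered positions, then it is not an extreme point of `S_w`; hence every extreme
point of `S_w` is a path of unweighted networks. -/
theorem stmt15 {T n : ℕ} (s : Fin T → Matrix (Fin n) (Fin n) ℝ) (hs : s ∈ SW T n)
    (k : Fin T) (u v u' v' : Fin n)
    (h1 : 0 < s k u v) (h2 : s k u v < 1)
    (h3 : 0 < s k u' v') (h4 : s k u' v' < 1)
    (hne : (u, v) ≠ (u', v') ∧ (u, v) ≠ (v', u')) :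
    s ∉ Set.extremePoints ℝ (SW T n) :=
  stmt15_general s k u v h1 h2
end

section
/- Let G[α] = G + αE_{t−p̄+1,p+1} + (1−α)E_{1,p+2} be as in the weighted quasi-complete comparison, with p ≥ 2, and define y^m = (G[α])^m 1. Then for every m ≥ 0, y_1^m ≥ y_{p+1}^m: the total weighted walk count of length m from node 1 (a clique node connected to node p+1) is at least that from node p+1. -/
/-!
Write `y m = G[α] ^ m *ᵥ 1` and `d m = y m z - y m b`. Comparing rows `z` and `b` of `G[α]` gives
`d (m + 1) + d m = Φ (y m)` with `Φ f = ∑_{s ≤ j < p} f j - α f a + (1 - α) f c`, which is at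
least `(1 - α) (f a + f c)` when `f` is nonnegative on the clique. The increments
`y (m + 1) - y m = G[α] ^ m *ᵥ (y 1 - 1)` are nonnegative for `m ≥ 1`: `y 1 - 1` is negative only
at `c` and at isolated vertices, and in row `z` the entry at `c` is outweighed by the one at `b`.
Since moreover `Φ (y 1 - 1) ≥ (1 - α) (p - 2) ≥ 0`, the sequence `Φ (y m)` is nondecreasing,
so `d (m + 2) ≥ d m`, and `d 0 = 0`, `d 1 = Φ 1 ≥ 0`.
-/

open Matrix Finset

theorem pow_mulVec_one_apply_le {ι : Type*} [Fintype ι] [DecidableEq ι] {M : Matrix ι ι ℝ}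
    {i j : ι} (hM : ∀ f, 0 ≤ f → 0 ≤ M *ᵥ f)
    (hΦ : ∀ f, 0 ≤ f → (M *ᵥ f) j + f j ≤ (M *ᵥ f) i + f i)
    (hg : 0 ≤ M *ᵥ (M *ᵥ 1 - 1))
    (hΦg : (M *ᵥ (M *ᵥ 1 - 1)) j + (M *ᵥ 1 - 1) j ≤ (M *ᵥ (M *ᵥ 1 - 1)) i + (M *ᵥ 1 - 1) i)
    (m : ℕ) : (M ^ m *ᵥ 1) j ≤ (M ^ m *ᵥ 1) i := by
  set g := M *ᵥ 1 - 1
  set Φ : (ι → ℝ) → ℝ := fun f => (M *ᵥ f) i + f i - ((M *ᵥ f) j + f j) with hΦdef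
  set d : ℕ → ℝ := fun m => (M ^ m *ᵥ 1) i - (M ^ m *ᵥ 1) j with hd
  have hpow : ∀ k f, 0 ≤ f → 0 ≤ M ^ k *ᵥ f := by
    intro k
    induction k with
    | zero => simp
    | succ k ih => intro f hf; rw [pow_succ', ← mulVec_mulVec]; exact hM _ (ih f hf)
  have hstep : ∀ m, d (m + 1) + d m = Φ (M ^ m *ᵥ 1) := by
    intro m
    simp only [hd, hΦdef, pow_succ', ← mulVec_mulVec]
    ring
  have hmono : ∀ m, Φ (M ^ m *ᵥ 1) ≤ Φ (M ^ (m + 1) *ᵥ 1) := by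
    intro m
    have hincrement : Φ (M ^ (m + 1) *ᵥ 1) - Φ (M ^ m *ᵥ 1) = Φ (M ^ m *ᵥ g) := by
      simp only [hΦdef, g, mulVec_sub, pow_succ, ← mulVec_mulVec, Pi.sub_apply]
      ring
    have : 0 ≤ Φ (M ^ m *ᵥ g) := by
      rcases m with _ | k
      · simpa [Φ] using hΦg
      · rw [pow_succ, ← mulVec_mulVec]
        exact sub_nonneg.2 (hΦ _ (hpow k _ hg))
    linarith
  have hd0 : d 0 = 0 := by simp [hd]
  have hΦ1 : 0 ≤ Φ (M ^ 0 *ᵥ 1) := by simpa [Φ] using hΦ 1 zero_le_one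
  suffices 0 ≤ d m by simpa [hd] using this
  induction m using Nat.twoStepInduction with
  | zero => rw [hd0]
  | one => linarith [hstep 0]
  | more k hk _ => linarith [hstep k, hstep (k + 1), hmono k]

lemma E_mulVec_apply {n : ℕ} {a b : Fin n} (hab : a ≠ b) (f : Fin n → ℝ) (i : Fin n) :
    (E a b *ᵥ f) i = (if i = a then f b else 0) + (if i = b then f a else 0) := by
  by_cases hia : i = a
  · subst hia
    simp [mulVec, dotProduct, E, hab]
  · by_cases hib : i = b
    · subst hib
      simp [mulVec, dotProduct, E, hia]
    · simp [mulVec, dotProduct, E, hia, hib]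

lemma card_erase_filter_val_lt {n p : ℕ} (hpn : p ≤ n) {j : Fin n} (hj : j.val < p) :
    #(({k | k.val < p} : Finset (Fin n)).erase j) = p - 1 := by
  rw [card_erase_of_mem (by simpa using hj), Fin.card_filter_val_lt, min_eq_right hpn]

-- `s = t - p(p-1)/2` is the number of clique vertices adjacent to vertex `p`.
def quasiComplete (n p s : ℕ) : Matrix (Fin n) (Fin n) ℝ := fun i j =>
  if i ≠ j ∧ ((i.val < p ∧ j.val < p) ∨ (i.val = p ∧ j.val < s) ∨ (j.val = p ∧ i.val < s))
  then 1 else 0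

lemma quasiComplete_mulVec_apply {n p s : ℕ} (hsp : s ≤ p) {b : Fin n} (hb : b.val = p)
    (f : Fin n → ℝ) (i : Fin n) :
    (quasiComplete n p s *ᵥ f) i =
      (if i.val < p then ∑ j ∈ ({j | j.val < p} : Finset (Fin n)).erase i, f j else 0) +
      (if i.val < s then f b else 0) + (if i = b then ∑ j with j.val < s, f j else 0) := by
  simp only [mulVec, dotProduct, quasiComplete, ite_mul, one_mul, zero_mul]
  rw [← sum_filter]
  by_cases hip : i.val < p
  · have hib : i ≠ b := fun h => by simp [h, hb] at hip
    rw [if_pos hip, if_neg hib, add_zero]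
    split_ifs with his
    · rw [add_comm, ← sum_insert (s := ({j | j.val < p} : Finset (Fin n)).erase i) (by simp [hb])]
      congr 1
      ext j
      simp only [mem_filter, mem_univ, true_and, mem_insert, mem_erase, Fin.ext_iff, ne_eq, hb]
      omega
    · rw [add_zero]
      congr 1
      ext j
      simp only [mem_filter, mem_univ, true_and, mem_erase, Fin.ext_iff, ne_eq]
      omega
  · by_cases hib : i = b
    · subst hib
      rw [if_neg hip, if_neg (by omega), if_pos rfl, zero_add, zero_add]
      congr 1
      ext j
      simp only [mem_filter, mem_univ, true_and, Fin.ext_iff, ne_eq, hb]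
      omega
    · rw [if_neg hip, if_neg (by omega), if_neg hib, add_zero, add_zero]
      refine sum_eq_zero fun j hj => ?_
      simp only [mem_filter, mem_univ, true_and, Fin.ext_iff, ne_eq, hb] at hj hib
      omega

/-- In the paper's 1-based numbering `a, b, z, c` are the vertices `t - p̄ + 1, p + 1, 1, p + 2`. -/
structure QuasiCompleteVertices {n : ℕ} (p s : ℕ) (a b z c : Fin n) : Prop where
  one_le_s : 1 ≤ s
  s_lt_p : s < p
  val_a : a.val = s
  val_b : b.val = p
  val_z : z.val = 0
  val_c : c.val = p + 1

def weightedQuasiComplete (n p s : ℕ) (α : ℝ) (a b z c : Fin n) : Matrix (Fin n) (Fin n) ℝ :=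
  quasiComplete n p s + α • E a b + (1 - α) • E z c

namespace QuasiCompleteVertices

variable {n p s : ℕ} {a b z c : Fin n}

lemma a_ne_b (h : QuasiCompleteVertices p s a b z c) : a ≠ b := by
  simp [Fin.ext_iff, h.val_a, h.val_b, h.s_lt_p.ne]

lemma z_ne_c (h : QuasiCompleteVertices p s a b z c) : z ≠ c := by
  simp [Fin.ext_iff, h.val_z, h.val_c]

lemma mulVec_apply (h : QuasiCompleteVertices p s a b z c) (α : ℝ) (f : Fin n → ℝ)
    (i : Fin n) :
    (weightedQuasiComplete n p s α a b z c *ᵥ f) i =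
      (if i.val < p then ∑ j ∈ ({j | j.val < p} : Finset (Fin n)).erase i, f j else 0) +
      (if i.val < s then f b else 0) + (if i = b then ∑ j with j.val < s, f j else 0) +
      α * ((if i = a then f b else 0) + (if i = b then f a else 0)) +
      (1 - α) * ((if i = z then f c else 0) + (if i = c then f z else 0)) := by
  simp only [weightedQuasiComplete, add_mulVec, smul_mulVec, Pi.add_apply, Pi.smul_apply,
    smul_eq_mul, quasiComplete_mulVec_apply h.s_lt_p.le h.val_b, E_mulVec_apply h.a_ne_b,
    E_mulVec_apply h.z_ne_c]

lemma le_mulVec_apply (h : QuasiCompleteVertices p s a b z c) {α : ℝ} (hα0 : 0 ≤ α)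
    (hα1 : α ≤ 1) {f : Fin n → ℝ} (hf : ∀ j : Fin n, j.val ≤ p → 0 ≤ f j) (i : Fin n) :
    (if i = z then f b + (1 - α) * f c else 0) ≤
      (weightedQuasiComplete n p s α a b z c *ᵥ f) i := by
  have hclique : ∀ k, 0 ≤ ∑ j ∈ ({j | j.val < p} : Finset (Fin n)).erase k, f j :=
    fun k => sum_nonneg fun j hj => hf j (by simp at hj; omega)
  have hlow : 0 ≤ ∑ j with j.val < s, f j :=
    sum_nonneg fun j hj => hf j (by simp at hj; have := h.s_lt_p; omega)
  have hfa := hf a (by rw [h.val_a]; exact h.s_lt_p.le)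
  have hfb := hf b h.val_b.le
  have hfz := hf z (by rw [h.val_z]; omega)
  rw [h.mulVec_apply]
  obtain ⟨hs1, hsp, ha, hb, hz, hc⟩ := h
  simp only [Fin.ext_iff, ha, hb, hz, hc]
  split_ifs <;>
    first
    | omega
    | nlinarith [hclique i, mul_nonneg hα0 hfa, mul_nonneg hα0 hfb,
        mul_nonneg (sub_nonneg.2 hα1) hfz]

lemma add_le_mulVec_apply_z (h : QuasiCompleteVertices p s a b z c) (α : ℝ) {f : Fin n → ℝ}
    (hf : ∀ j : Fin n, j.val < p → 0 ≤ f j) :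
    (1 - α) * (f a + f c) + ((weightedQuasiComplete n p s α a b z c *ᵥ f) b + f b) ≤
      (weightedQuasiComplete n p s α a b z c *ᵥ f) z + f z := by
  rw [h.mulVec_apply, h.mulVec_apply]
  obtain ⟨hs1, hsp, ha, hb, hz, hc⟩ := h
  have hclique : f z + ∑ j ∈ ({j | j.val < p} : Finset (Fin n)).erase z, f j =
      ∑ j with j.val < p, f j :=
    add_sum_erase _ _ (by simp [hz]; omega)
  have hlow : ∑ j with j.val < s, f j + f a ≤ ∑ j with j.val < p, f j := by
    rw [add_comm, ← sum_insert (by simp [ha])]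
    refine sum_le_sum_of_subset_of_nonneg ?_ fun j hj _ => hf j (by simpa using hj)
    intro j hj
    simp only [mem_insert, mem_filter, mem_univ, true_and, Fin.ext_iff, ha] at hj ⊢
    omega
  simp (disch := omega) only [Fin.ext_iff, ha, hb, hz, hc, if_pos, if_neg, ↓reduceIte,
    add_zero, zero_add, mul_zero]
  linarith

lemma mulVec_one_apply_a (h : QuasiCompleteVertices p s a b z c) (α : ℝ) :
    (weightedQuasiComplete n p s α a b z c *ᵥ 1) a = p - 1 + α := by
  rw [h.mulVec_apply]
  have hcn := c.isLt
  obtain ⟨hs1, hsp, ha, hb, hz, hc⟩ := h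
  simp (disch := omega) only [Fin.ext_iff, ha, hb, hz, hc, if_pos, if_neg, ↓reduceIte,
    Pi.one_apply, add_zero, mul_zero, mul_one, sum_const, nsmul_eq_mul,
    card_erase_filter_val_lt (show p ≤ n by omega) (show a.val < p by omega)]
  rw [Nat.cast_sub (by omega), Nat.cast_one]

lemma mulVec_one_apply_b (h : QuasiCompleteVertices p s a b z c) (α : ℝ) :
    (weightedQuasiComplete n p s α a b z c *ᵥ 1) b = s + α := by
  rw [h.mulVec_apply]
  have hcn := c.isLt
  obtain ⟨hs1, hsp, ha, hb, hz, hc⟩ := h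
  simp (disch := omega) only [Fin.ext_iff, ha, hb, hz, hc, if_neg, ↓reduceIte,
    Pi.one_apply, add_zero, zero_add, mul_zero, mul_one, sum_const, Fin.card_filter_val_lt,
    nsmul_eq_mul]
  rw [min_eq_right (by omega)]

lemma mulVec_one_apply_c (h : QuasiCompleteVertices p s a b z c) (α : ℝ) :
    (weightedQuasiComplete n p s α a b z c *ᵥ 1) c = 1 - α := by
  rw [h.mulVec_apply]
  obtain ⟨hs1, hsp, ha, hb, hz, hc⟩ := h
  simp (disch := omega) only [Fin.ext_iff, ha, hb, hz, hc, if_neg, ↓reduceIte, Pi.one_apply,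
    add_zero, zero_add, mul_zero, mul_one]

lemma one_le_mulVec_one_apply (h : QuasiCompleteVertices p s a b z c) {α : ℝ} (hα0 : 0 ≤ α)
    (hα1 : α ≤ 1) {j : Fin n} (hj : j.val ≤ p) :
    1 ≤ (weightedQuasiComplete n p s α a b z c *ᵥ 1) j := by
  rcases hj.lt_or_eq with hj | hj
  · rw [h.mulVec_apply]
    have hcn := c.isLt
    obtain ⟨hs1, hsp, ha, hb, hz, hc⟩ := h
    simp (disch := omega) only [Fin.ext_iff, ha, hb, hz, hc, if_pos, if_neg, Pi.one_apply,
      add_zero, mul_one, sum_const, nsmul_eq_mul, card_erase_filter_val_lt (show p ≤ n by omega) hj]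
    have hp : (1 : ℝ) ≤ (p - 1 : ℕ) := by norm_cast; omega
    split_ifs <;> linarith
  · rw [show j = b from Fin.ext (hj.trans h.val_b.symm), h.mulVec_one_apply_b]
    have : (1 : ℝ) ≤ s := by exact_mod_cast h.one_le_s
    linarith

lemma mulVec_nonneg (h : QuasiCompleteVertices p s a b z c) {α : ℝ} (hα0 : 0 ≤ α)
    (hα1 : α ≤ 1) {f : Fin n → ℝ} (hf : 0 ≤ f) :
    0 ≤ weightedQuasiComplete n p s α a b z c *ᵥ f := by
  intro i
  refine le_trans ?_ (h.le_mulVec_apply hα0 hα1 (fun j _ => hf j) i)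
  split_ifs
  · exact add_nonneg (hf b) (mul_nonneg (sub_nonneg.2 hα1) (hf c))
  · rfl

lemma mulVec_apply_b_add_le (h : QuasiCompleteVertices p s a b z c) {α : ℝ} (hα1 : α ≤ 1)
    {f : Fin n → ℝ} (hf : 0 ≤ f) :
    (weightedQuasiComplete n p s α a b z c *ᵥ f) b + f b ≤
      (weightedQuasiComplete n p s α a b z c *ᵥ f) z + f z := by
  linarith [h.add_le_mulVec_apply_z α (f := f) (fun j _ => hf j),
    mul_nonneg (sub_nonneg.2 hα1) (add_nonneg (hf a) (hf c))]

lemma mulVec_mulVec_one_sub_one_nonneg (h : QuasiCompleteVertices p s a b z c) {α : ℝ}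
    (hα0 : 0 ≤ α) (hα1 : α ≤ 1) :
    0 ≤ weightedQuasiComplete n p s α a b z c *ᵥ
      (weightedQuasiComplete n p s α a b z c *ᵥ 1 - 1) := by
  intro i
  refine le_trans ?_ (h.le_mulVec_apply hα0 hα1
    (fun j hj => sub_nonneg.2 (h.one_le_mulVec_one_apply hα0 hα1 hj)) i)
  have hs : (1 : ℝ) ≤ s := by exact_mod_cast h.one_le_s
  split_ifs
  · simp only [Pi.zero_apply, h.mulVec_one_apply_b, h.mulVec_one_apply_c]
    nlinarith
  · rfl

lemma mulVec_one_sub_one_apply_b_add_le (h : QuasiCompleteVertices p s a b z c) {α : ℝ}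
    (hα0 : 0 ≤ α) (hα1 : α ≤ 1) :
    (weightedQuasiComplete n p s α a b z c *ᵥ
          (weightedQuasiComplete n p s α a b z c *ᵥ 1 - 1)) b +
        (weightedQuasiComplete n p s α a b z c *ᵥ 1 - 1) b ≤
      (weightedQuasiComplete n p s α a b z c *ᵥ
          (weightedQuasiComplete n p s α a b z c *ᵥ 1 - 1)) z +
        (weightedQuasiComplete n p s α a b z c *ᵥ 1 - 1) z := by
  have hp : (2 : ℝ) ≤ p := by exact_mod_cast h.one_le_s.trans_lt h.s_lt_p
  have hac : 0 ≤ (1 - α) * ((weightedQuasiComplete n p s α a b z c *ᵥ 1 - 1) a +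
      (weightedQuasiComplete n p s α a b z c *ᵥ 1 - 1) c) := by
    simp only [Pi.sub_apply, Pi.one_apply, h.mulVec_one_apply_a, h.mulVec_one_apply_c]
    nlinarith
  linarith [h.add_le_mulVec_apply_z α (f := weightedQuasiComplete n p s α a b z c *ᵥ 1 - 1)
    (fun j hj => sub_nonneg.2 (h.one_le_mulVec_one_apply hα0 hα1 hj.le))]

end QuasiCompleteVertices

theorem stmt18_general {n p t : ℕ}
    (h1 : p * (p - 1) / 2 < t) (h2 : t < p * (p + 1) / 2)
    (a b z c : Fin n)
    (ha : a.val = t - p * (p - 1) / 2) (hb : b.val = p) (hz : z.val = 0)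
    (hc : c.val = p + 1)
    (G : Matrix (Fin n) (Fin n) ℝ)
    (hG : ∀ i j : Fin n, G i j =
      if i ≠ j ∧ ((i.val < p ∧ j.val < p) ∨
        (i.val = p ∧ j.val < t - p * (p - 1) / 2) ∨
        (j.val = p ∧ i.val < t - p * (p - 1) / 2)) then 1 else 0)
    (α : ℝ) (hα0 : 0 ≤ α) (hα1 : α ≤ 1) :
    ∀ m : ℕ,
      (((G + α • E a b + (1 - α) • E z c) ^ m) *ᵥ (fun _ => (1 : ℝ))) b ≤
        (((G + α • E a b + (1 - α) • E z c) ^ m) *ᵥ (fun _ => (1 : ℝ))) z := by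
  have hhalf : p * (p + 1) / 2 = p * (p - 1) / 2 + p := by
    rw [← Nat.add_mul_div_left _ _ two_pos]
    congr 1
    rcases p with _ | p
    · rfl
    · simp only [Nat.add_sub_cancel]; ring
  have h : QuasiCompleteVertices p (t - p * (p - 1) / 2) a b z c :=
    ⟨by omega, by omega, ha, hb, hz, hc⟩
  obtain rfl : G = quasiComplete n p (t - p * (p - 1) / 2) := Matrix.ext hG
  exact pow_mulVec_one_apply_le (M := weightedQuasiComplete n p _ α a b z c)
    (fun _ hf => h.mulVec_nonneg hα0 hα1 hf) (fun _ hf => h.mulVec_apply_b_add_le hα1 hf)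
    (h.mulVec_mulVec_one_sub_one_nonneg hα0 hα1) (h.mulVec_one_sub_one_apply_b_add_le hα0 hα1)

/-- 0-indexed: with `G` the quasi-complete graph (clique on `0,…,p-1`, `p ≥ 2`,
node `p` adjacent to `0,…,t-p̄-1`, `p̄ = p(p-1)/2 < t < p(p+1)/2`, node `p+1`
isolated) and `G[α] = G + α E_{a b} + (1-α) E_{z c}` for `α ∈ [0,1]`, the weighted
walk counts `yᵐ = (G[α])ᵐ 1` satisfy `yᵐ_z ≥ yᵐ_b` for every `m ≥ 0`
(node `z` is the first clique node, node `b` is the node `p`). -/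
theorem stmt18 {n p t : ℕ} (hp : 2 ≤ p)
    (h1 : p * (p - 1) / 2 < t) (h2 : t < p * (p + 1) / 2)
    (a b z c : Fin n)
    (ha : a.val = t - p * (p - 1) / 2) (hb : b.val = p) (hz : z.val = 0)
    (hc : c.val = p + 1)
    (G : Matrix (Fin n) (Fin n) ℝ)
    (hG : ∀ i j : Fin n, G i j =
      if i ≠ j ∧ ((i.val < p ∧ j.val < p) ∨
        (i.val = p ∧ j.val < t - p * (p - 1) / 2) ∨
        (j.val = p ∧ i.val < t - p * (p - 1) / 2)) then 1 else 0)
    (α : ℝ) (hα0 : 0 ≤ α) (hα1 : α ≤ 1) :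
    ∀ m : ℕ,
      (((G + α • E a b + (1 - α) • E z c) ^ m) *ᵥ (fun _ => (1 : ℝ))) b ≤
        (((G + α • E a b + (1 - α) • E z c) ^ m) *ᵥ (fun _ => (1 : ℝ))) z :=
  stmt18_general h1 h2 a b z c ha hb hz hc G hG α hα0 hα1
end
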